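/- arXiv:2511.19922 — 4 statements merged into one kernel-verified Lean document; each statement's English description precedes it below -/
import Mathlib

section
/- Let f : ℝ → ℝ be C^k on [a,b] with k ≥ 2 and f^(k)(x) ≥ 1 for all x ∈ [a,b]. Then there is a constant c_k depending only on k (not on f, a, b) such that for all λ > 0, |∫_a^b e^{iλ f(x)} dx| ≤ c_k λ^{-1/k}. -/
open Real Complex intervalIntegral Set MeasureTheory

lemma ofReal_hasDerivWithinAt {f : ℝ → ℝ} {u x : ℝ} {s : Set ℝ}
    (hf : HasDerivWithinAt f u s x) :
    HasDerivWithinAt (fun y : ℝ => (f y : ℂ)) (u : ℂ) s x := by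
  exact hf.ofReal_comp

lemma my_iter_subset {f : ℝ → ℝ} {s t : Set ℝ} (hst : s ⊆ t)
    (hs : UniqueDiffOn ℝ s) (ht : UniqueDiffOn ℝ t) {n j : ℕ} (hjn : j ≤ n)
    (hf : ContDiffOn ℝ n f t) :
    ∀ x ∈ s, iteratedDerivWithin j f s x = iteratedDerivWithin j f t x := by
  induction j with
  | zero => intro x hx; simp
  | succ j IH =>
    intro x hx
    have hjn' : j ≤ n := le_trans (Nat.le_succ j) hjn
    rw [iteratedDerivWithin_succ, iteratedDerivWithin_succ]
    have h1 : derivWithin (iteratedDerivWithin j f s) s x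
        = derivWithin (iteratedDerivWithin j f t) s x :=
      derivWithin_congr (fun y hy => IH hjn' y hy) (IH hjn' x hx)
    rw [h1]
    have hdiff : DifferentiableWithinAt ℝ (iteratedDerivWithin j f t) t x :=
      hf.differentiableOn_iteratedDerivWithin
        (by exact_mod_cast Nat.lt_of_lt_of_le (Nat.lt_succ_self j) hjn) ht x (hst hx)
    exact (hdiff.hasDerivWithinAt.mono hst).derivWithin (hs x hx)

lemma my_gap {h H : ℝ → ℝ} {a b : ℝ}
    (hh : ∀ x ∈ Icc a b, HasDerivWithinAt h (H x) (Icc a b) x)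
    (hH : ∀ x ∈ Icc a b, 1 ≤ H x) :
    ∀ x ∈ Icc a b, ∀ y ∈ Icc a b, x ≤ y → y - x ≤ h y - h x := by
  have hmono : MonotoneOn (fun z => h z - z) (Icc a b) := by
    apply monotoneOn_of_hasDerivWithinAt_nonneg (convex_Icc a b) (f' := fun z => H z - 1)
    · exact fun z hz => ((hh z hz).continuousWithinAt).sub continuousWithinAt_id
    · intro z hz
      rw [interior_Icc] at hz
      exact (((hh z (Ioo_subset_Icc_self hz)).sub (hasDerivWithinAt_id z _)).mono
        (by rw [interior_Icc]; exact Ioo_subset_Icc_self))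
    · intro z hz
      rw [interior_Icc] at hz
      have := hH z (Ioo_subset_Icc_self hz); linarith
  intro x hx y hy hxy
  have := hmono hx hy hxy
  simp only at this
  linarith

lemma my_norm_exp (lam t : ℝ) : ‖Complex.exp (Complex.I * lam * t)‖ = 1 := by
  rw [Complex.norm_exp]
  simp [Complex.mul_re]

lemma my_conj (f : ℝ → ℝ) (a b lam : ℝ) :
    ‖∫ x in a..b, Complex.exp (Complex.I * lam * (-(f x) : ℝ))‖
      = ‖∫ x in a..b, Complex.exp (Complex.I * lam * (f x : ℝ))‖ := by
  have key : ∀ x : ℝ, Complex.exp (Complex.I * lam * (-(f x) : ℝ))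
      = starRingEnd ℂ (Complex.exp (Complex.I * lam * (f x : ℝ))) := by
    intro x
    rw [← Complex.exp_conj]
    congr 1
    simp only [map_mul, Complex.conj_I, Complex.conj_ofReal, Complex.ofReal_neg]
    ring
  simp_rw [key]
  rw [intervalIntegral]
  rw [show (∫ x in a..b, Complex.exp (Complex.I * lam * (f x : ℝ))) =
    (∫ x in Ioc a b, Complex.exp (Complex.I * lam * (f x : ℝ)) ∂volume)
    - (∫ x in Ioc b a, Complex.exp (Complex.I * lam * (f x : ℝ)) ∂volume) from rfl]
  rw [integral_conj, integral_conj, ← map_sub]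
  exact RCLike.norm_conj _

lemma vdc_one {f g φ : ℝ → ℝ} {a b μ lam : ℝ} (hab : a ≤ b) (hμ : 0 < μ) (hlam : 0 < lam)
    (hf : ∀ x ∈ Icc a b, HasDerivWithinAt f (g x) (Icc a b) x)
    (hg : ∀ x ∈ Icc a b, HasDerivWithinAt g (φ x) (Icc a b) x)
    (hφc : ContinuousOn φ (Icc a b))
    (hμg : ∀ x ∈ Icc a b, μ ≤ g x)
    (hsign : (∀ x ∈ Icc a b, 0 ≤ φ x) ∨ (∀ x ∈ Icc a b, φ x ≤ 0)) :
    ‖∫ x in a..b, Complex.exp (Complex.I * lam * f x)‖ ≤ 3 / (lam * μ) := by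
  set F : ℝ → ℂ := fun x => Complex.exp (Complex.I * lam * f x) with hFdef
  set G : ℝ → ℂ := fun x => (Complex.I * lam * g x)⁻¹ with hGdef
  set Fd : ℝ → ℂ := fun x => Complex.exp (Complex.I * lam * f x) * (Complex.I * lam * g x)
    with hFddef
  set Gd : ℝ → ℂ := fun x => -((Complex.I * lam * g x) ^ 2)⁻¹ * (Complex.I * lam * φ x)
    with hGddef
  have hgpos : ∀ x ∈ Icc a b, 0 < g x := fun x hx => lt_of_lt_of_le hμ (hμg x hx)
  have gne : ∀ x ∈ Icc a b, g x ≠ 0 := fun x hx => (hgpos x hx).ne'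
  have zne : ∀ x ∈ Icc a b, (Complex.I * lam * g x : ℂ) ≠ 0 := by
    intro x hx
    simp [Complex.I_ne_zero, Complex.ofReal_eq_zero, hlam.ne', gne x hx]
  have hfc : ContinuousOn f (Icc a b) := fun x hx => (hf x hx).continuousWithinAt
  have hgc : ContinuousOn g (Icc a b) := fun x hx => (hg x hx).continuousWithinAt
  have hF : ∀ x ∈ Icc a b, HasDerivWithinAt F (Fd x) (Icc a b) x := by
    intro x hx
    exact ((ofReal_hasDerivWithinAt (hf x hx)).const_mul (Complex.I * lam)).cexp
  have hG : ∀ x ∈ Icc a b, HasDerivWithinAt G (Gd x) (Icc a b) x := by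
    intro x hx
    have h1 : HasDerivWithinAt (fun y : ℝ => Complex.I * lam * (g y : ℂ))
        (Complex.I * lam * (φ x : ℂ)) (Icc a b) x :=
      (ofReal_hasDerivWithinAt (hg x hx)).const_mul (Complex.I * lam)
    have h2 := ((hasDerivAt_inv (zne x hx)).complexToReal_fderiv).comp_hasDerivWithinAt x h1
    exact h2
  have hcF : ContinuousOn F (Icc a b) := fun x hx => (hF x hx).continuousWithinAt
  have hcG : ContinuousOn G (Icc a b) := fun x hx => (hG x hx).continuousWithinAt
  have hcFd : ContinuousOn Fd (Icc a b) :=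
    hcF.mul (continuousOn_const.mul (Complex.continuous_ofReal.comp_continuousOn hgc))
  have hcGd : ContinuousOn Gd (Icc a b) := by
    apply ContinuousOn.mul
    · exact (((continuousOn_const.mul
        (Complex.continuous_ofReal.comp_continuousOn hgc)).pow 2).inv₀
        (fun x hx => pow_ne_zero 2 (zne x hx))).neg
    · exact continuousOn_const.mul (Complex.continuous_ofReal.comp_continuousOn hφc)
  -- FTC for F * G
  have hFTC : (∫ x in a..b, (Fd x * G x + F x * Gd x)) = F b * G b - F a * G a := by
    apply intervalIntegral.integral_eq_sub_of_hasDeriv_right_of_le hab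
    · exact fun x hx => ((hF x hx).mul (hG x hx)).continuousWithinAt
    · intro x hx
      exact (((hF x (Ioo_subset_Icc_self hx)).mul (hG x (Ioo_subset_Icc_self hx))).mono_of_mem_nhdsWithin
        (Icc_mem_nhdsGT_of_mem ⟨le_of_lt hx.1, hx.2⟩))
    · exact ((hcFd.mul hcG).add (hcF.mul hcGd)).intervalIntegrable_of_Icc hab
  have hint1 : IntervalIntegrable F volume a b := hcF.intervalIntegrable_of_Icc hab
  have hint2 : IntervalIntegrable (fun x => F x * Gd x) volume a b :=
    (hcF.mul hcGd).intervalIntegrable_of_Icc hab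
  have hcongr : (∫ x in a..b, (Fd x * G x + F x * Gd x))
      = (∫ x in a..b, F x) + ∫ x in a..b, F x * Gd x := by
    rw [← intervalIntegral.integral_add hint1 hint2]
    apply intervalIntegral.integral_congr
    intro x hx
    rw [uIcc_of_le hab] at hx
    have : Fd x * G x = F x := by
      show Complex.exp (Complex.I * lam * f x) * (Complex.I * lam * g x)
        * (Complex.I * lam * g x)⁻¹ = Complex.exp (Complex.I * lam * f x)
      rw [mul_assoc, mul_inv_cancel₀ (zne x hx), mul_one]
    simp only [this]
  have hsplit : (∫ x in a..b, F x)
      = (F b * G b - F a * G a) - ∫ x in a..b, F x * Gd x := by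
    rw [← hFTC, hcongr]; ring
  -- norm bounds
  have hFnorm : ∀ x : ℝ, ‖F x‖ = 1 := by
    intro x
    rw [hFdef]
    simp only []
    rw [Complex.norm_exp]
    simp [Complex.mul_re]
  have hGnorm : ∀ x ∈ Icc a b, ‖G x‖ ≤ 1 / (lam * μ) := by
    intro x hx
    rw [hGdef]
    simp only []
    rw [norm_inv, norm_mul, norm_mul, Complex.norm_I, one_mul, Complex.norm_real,
      Complex.norm_real, Real.norm_eq_abs, Real.norm_eq_abs, abs_of_pos hlam,
      abs_of_pos (hgpos x hx), ← one_div]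
    apply one_div_le_one_div_of_le (mul_pos hlam hμ)
    exact mul_le_mul_of_nonneg_left (hμg x hx) hlam.le
  have endpt : ∀ x ∈ Icc a b, ‖F x * G x‖ ≤ 1 / (lam * μ) := by
    intro x hx
    rw [norm_mul, hFnorm x, one_mul]
    exact hGnorm x hx
  -- the integral of ‖F * Gd‖
  set ψ : ℝ → ℝ := fun x => -(g x)⁻¹ with hψdef
  set ψd : ℝ → ℝ := fun x => φ x / g x ^ 2 with hψddef
  have hψFTC : (∫ x in a..b, ψd x) = ψ b - ψ a := by
    apply intervalIntegral.integral_eq_sub_of_hasDeriv_right_of_le hab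
    · exact ((hgc.inv₀ gne)).neg
    · intro x hx
      have : HasDerivWithinAt ψ (ψd x) (Icc a b) x := by
        have h1 := ((hg x (Ioo_subset_Icc_self hx)).inv (gne x (Ioo_subset_Icc_self hx))).neg
        rw [show ψd x = -(-φ x / g x ^ 2) by simp only [hψddef]; ring]
        exact h1
      exact this.mono_of_mem_nhdsWithin (Icc_mem_nhdsGT_of_mem ⟨le_of_lt hx.1, hx.2⟩)
    · exact (hφc.div (hgc.pow 2) (fun x hx => pow_ne_zero 2 (gne x hx))).intervalIntegrable_of_Icc hab
  have hψbnd : |ψ b - ψ a| ≤ 1 / μ := by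
    have ha' : a ∈ Icc a b := ⟨le_refl a, hab⟩
    have hb' : b ∈ Icc a b := ⟨hab, le_refl b⟩
    have h1 : (g a)⁻¹ ≤ μ⁻¹ := inv_anti₀ hμ (hμg a ha')
    have h2 : (g b)⁻¹ ≤ μ⁻¹ := inv_anti₀ hμ (hμg b hb')
    have h3 : 0 < (g a)⁻¹ := inv_pos.mpr (hgpos a ha')
    have h4 : 0 < (g b)⁻¹ := inv_pos.mpr (hgpos b hb')
    rw [hψdef, one_div, abs_le]
    constructor <;> simp only [] <;> [linarith; linarith]
  have hGdnorm : ∀ x ∈ Icc a b, ‖F x * Gd x‖ = |φ x| / (lam * g x ^ 2) := by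
    intro x hx
    rw [norm_mul, hFnorm x, one_mul, hGddef]
    simp only []
    simp only [norm_inv, norm_neg, norm_pow, norm_mul, Complex.norm_I, one_mul,
      Complex.norm_real, Real.norm_eq_abs, abs_of_pos hlam, abs_of_pos (hgpos x hx)]
    field_simp [hlam.ne', gne x hx]
  have key2 : (∫ x in a..b, ‖F x * Gd x‖) ≤ 1 / (lam * μ) := by
    rcases hsign with hpos | hneg
    · have : (∫ x in a..b, ‖F x * Gd x‖) = (1/lam) * ∫ x in a..b, ψd x := by
        rw [← intervalIntegral.integral_const_mul]
        apply intervalIntegral.integral_congr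
        intro x hx
        rw [uIcc_of_le hab] at hx
        show ‖F x * Gd x‖ = 1 / lam * ψd x
        rw [hGdnorm x hx, _root_.abs_of_nonneg (hpos x hx), hψddef]
        field_simp
        try ring
      rw [this, hψFTC]
      have : ψ b - ψ a ≤ 1/μ := le_trans (le_abs_self _) hψbnd
      calc (1/lam) * (ψ b - ψ a) ≤ (1/lam) * (1/μ) := by
            apply mul_le_mul_of_nonneg_left this (by positivity)
        _ = 1 / (lam * μ) := by field_simp
    · have : (∫ x in a..b, ‖F x * Gd x‖) = -((1/lam) * ∫ x in a..b, ψd x) := by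
        rw [← intervalIntegral.integral_const_mul, ← intervalIntegral.integral_neg]
        apply intervalIntegral.integral_congr
        intro x hx
        rw [uIcc_of_le hab] at hx
        show ‖F x * Gd x‖ = -(1 / lam * ψd x)
        rw [hGdnorm x hx, _root_.abs_of_nonpos (hneg x hx), hψddef]
        field_simp
        try ring
      rw [this, hψFTC]
      have : -(ψ b - ψ a) ≤ 1/μ := le_trans (neg_le_abs _) hψbnd
      calc -((1/lam) * (ψ b - ψ a)) = (1/lam) * (-(ψ b - ψ a)) := by ring
        _ ≤ (1/lam) * (1/μ) := by
            apply mul_le_mul_of_nonneg_left this (by positivity)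
        _ = 1 / (lam * μ) := by field_simp
  have hmid : ‖∫ x in a..b, F x * Gd x‖ ≤ 1 / (lam * μ) :=
    le_trans (intervalIntegral.norm_integral_le_integral_norm hab) key2
  rw [show (∫ x in a..b, Complex.exp (Complex.I * lam * f x)) = ∫ x in a..b, F x from rfl,
    hsplit]
  have ha' : a ∈ Icc a b := ⟨le_refl a, hab⟩
  have hb' : b ∈ Icc a b := ⟨hab, le_refl b⟩
  calc ‖F b * G b - F a * G a - ∫ x in a..b, F x * Gd x‖
      ≤ ‖F b * G b - F a * G a‖ + ‖∫ x in a..b, F x * Gd x‖ := norm_sub_le _ _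
    _ ≤ (‖F b * G b‖ + ‖F a * G a‖) + ‖∫ x in a..b, F x * Gd x‖ := by
        gcongr; exact norm_sub_le _ _
    _ ≤ (1/(lam*μ) + 1/(lam*μ)) + 1/(lam*μ) := by
        gcongr
        · exact endpt b hb'
        · exact endpt a ha'
    _ = 3 / (lam * μ) := by ring

lemma split_core {f h : ℝ → ℝ} {a b δ lam M : ℝ} (hδ : 0 < δ) (hab : a ≤ b) (hM : 0 ≤ M)
    (hfc : ContinuousOn f (Icc a b))
    (hhc : ContinuousOn h (Icc a b))
    (hgap : ∀ x ∈ Icc a b, ∀ y ∈ Icc a b, x ≤ y → y - x ≤ h y - h x)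
    (side : ∀ a' b', a ≤ a' → a' ≤ b' → b' ≤ b →
       ((∀ x ∈ Icc a' b', δ ≤ h x) ∨ (∀ x ∈ Icc a' b', h x ≤ -δ)) →
       ‖∫ x in a'..b', Complex.exp (Complex.I * lam * f x)‖ ≤ M) :
    ‖∫ x in a..b, Complex.exp (Complex.I * lam * f x)‖ ≤ 2 * δ + 2 * M := by
  -- construct α
  obtain ⟨α, hαmem, hαS, hαub⟩ : ∃ α, α ∈ Icc a b ∧ (α = a ∨ ∀ x ∈ Icc a α, h x ≤ -δ) ∧
      (∀ x ∈ Icc a b, h x ≤ -δ → x ≤ α) := by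
    set S : Set ℝ := Icc a b ∩ h ⁻¹' (Iic (-δ)) with hSdef
    have hSclosed : IsClosed S :=
      hhc.preimage_isClosed_of_isClosed isClosed_Icc isClosed_Iic
    have hScpt : IsCompact S := isCompact_Icc.of_isClosed_subset hSclosed (fun x hx => hx.1)
    by_cases hS : S.Nonempty
    · refine ⟨sSup S, (hScpt.sSup_mem hS).1, Or.inr ?_, ?_⟩
      · intro x hx
        have hα := hScpt.sSup_mem hS
        have hxab : x ∈ Icc a b := ⟨hx.1, le_trans hx.2 hα.1.2⟩
        have := hgap x hxab (sSup S) hα.1 hx.2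
        have h2 : h (sSup S) ≤ -δ := hα.2
        have hx2 : x ≤ sSup S := hx.2
        linarith
      · exact fun x hx hxδ => le_csSup hScpt.bddAbove ⟨hx, hxδ⟩
    · refine ⟨a, ⟨le_refl a, hab⟩, Or.inl rfl, ?_⟩
      intro x hx hxδ
      exact absurd ⟨⟨hx.1, hx.2⟩, hxδ⟩ (fun hmem => hS ⟨x, hmem⟩)
  -- construct β
  obtain ⟨β, hβmem, hβS, hβlb⟩ : ∃ β, β ∈ Icc a b ∧ (β = b ∨ ∀ x ∈ Icc β b, δ ≤ h x) ∧
      (∀ x ∈ Icc a b, δ ≤ h x → β ≤ x) := by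
    set T : Set ℝ := Icc a b ∩ h ⁻¹' (Ici δ) with hTdef
    have hTclosed : IsClosed T :=
      hhc.preimage_isClosed_of_isClosed isClosed_Icc isClosed_Ici
    have hTcpt : IsCompact T := isCompact_Icc.of_isClosed_subset hTclosed (fun x hx => hx.1)
    by_cases hT : T.Nonempty
    · refine ⟨sInf T, (hTcpt.sInf_mem hT).1, Or.inr ?_, ?_⟩
      · intro x hx
        have hβ := hTcpt.sInf_mem hT
        have hxab : x ∈ Icc a b := ⟨le_trans hβ.1.1 hx.1, hx.2⟩
        have := hgap (sInf T) hβ.1 x hxab hx.1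
        have h2 : δ ≤ h (sInf T) := hβ.2
        have hx2 : sInf T ≤ x := hx.1
        linarith
      · exact fun x hx hxδ => csInf_le hTcpt.bddBelow ⟨hx, hxδ⟩
    · refine ⟨b, ⟨hab, le_refl b⟩, Or.inl rfl, ?_⟩
      intro x hx hxδ
      exact absurd ⟨⟨hx.1, hx.2⟩, hxδ⟩ (fun hmem => hT ⟨x, hmem⟩)
  -- α ≤ β
  have hαβ : α ≤ β := by
    by_contra hcon
    push_neg at hcon
    rcases hαS with rfl | hαS
    · exact absurd hβmem.1 (not_le.mpr hcon)
    rcases hβS with rfl | hβS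
    · exact absurd hαmem.2 (not_le.mpr hcon)
    have h1 : h α ≤ -δ := hαS α ⟨hαmem.1, le_refl α⟩
    have h2 : δ ≤ h β := hβS β ⟨le_refl β, hβmem.2⟩
    have := hgap β hβmem α hαmem hcon.le
    linarith
  -- β - α ≤ 2δ
  have hmidlen : β - α ≤ 2 * δ := by
    have key : ∀ ε > (0:ℝ), β - α ≤ 2 * δ + ε := by
      intro ε hε
      by_cases hc2 : β - α ≤ ε
      · linarith
      push_neg at hc2
      obtain ⟨u, hu⟩ : ∃ u, u = α + ε/2 := ⟨_, rfl⟩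
      obtain ⟨v, hv⟩ : ∃ v, v = β - ε/2 := ⟨_, rfl⟩
      have huv : u < v := by rw [hu, hv]; linarith
      have humem : u ∈ Icc a b := ⟨le_trans hαmem.1 (by linarith), by linarith [hβmem.2]⟩
      have hvmem : v ∈ Icc a b := ⟨by linarith [hαmem.1], le_trans (by linarith) hβmem.2⟩
      have hu1 : -δ < h u := by
        by_contra hcon; push_neg at hcon
        have := hαub u humem hcon
        linarith
      have hv1 : h v < δ := by
        by_contra hcon; push_neg at hcon
        have := hβlb v hvmem hcon
        linarith
      have := hgap u humem v hvmem huv.le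
      linarith
    by_contra hcon
    push_neg at hcon
    have := key ((β - α - 2*δ)/2) (by linarith)
    linarith
  -- integrability
  have hcontE : ContinuousOn (fun x => Complex.exp (Complex.I * lam * f x)) (Icc a b) :=
    Complex.continuous_exp.comp_continuousOn
      (continuousOn_const.mul (Complex.continuous_ofReal.comp_continuousOn hfc))
  have hInt : ∀ a' b', a ≤ a' → a' ≤ b' → b' ≤ b →
      IntervalIntegrable (fun x => Complex.exp (Complex.I * lam * f x)) volume a' b' :=
    fun a' b' h1 h2 h3 =>
      (hcontE.mono (Icc_subset_Icc h1 h3)).intervalIntegrable_of_Icc h2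
  have e1 : (∫ x in a..α, Complex.exp (Complex.I * lam * f x))
      + (∫ x in α..β, Complex.exp (Complex.I * lam * f x))
      = ∫ x in a..β, Complex.exp (Complex.I * lam * f x) :=
    integral_add_adjacent_intervals (hInt a α (le_refl a) hαmem.1 (le_trans hαmem.2 (le_refl b)))
      (hInt α β hαmem.1 hαβ hβmem.2)
  have e2 : (∫ x in a..β, Complex.exp (Complex.I * lam * f x))
      + (∫ x in β..b, Complex.exp (Complex.I * lam * f x))
      = ∫ x in a..b, Complex.exp (Complex.I * lam * f x) :=
    integral_add_adjacent_intervals (hInt a β (le_refl a) hβmem.1 hβmem.2)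
      (hInt β b hβmem.1 hβmem.2 (le_refl b))
  have p1 : ‖∫ x in a..α, Complex.exp (Complex.I * lam * f x)‖ ≤ M := by
    rcases hαS with rfl | hαS
    · simp [hM]
    · exact side a α (le_refl a) hαmem.1 hαmem.2 (Or.inr hαS)
  have p3 : ‖∫ x in β..b, Complex.exp (Complex.I * lam * f x)‖ ≤ M := by
    rcases hβS with rfl | hβS
    · simp [hM]
    · exact side β b hβmem.1 hβmem.2 (le_refl b) (Or.inl hβS)
  have p2 : ‖∫ x in α..β, Complex.exp (Complex.I * lam * f x)‖ ≤ 2 * δ := by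
    have := intervalIntegral.norm_integral_le_of_norm_le_const
      (C := 1) (a := α) (b := β)
      (f := fun x => Complex.exp (Complex.I * lam * f x))
      (fun x _ => le_of_eq (my_norm_exp lam (f x)))
    calc ‖∫ x in α..β, Complex.exp (Complex.I * lam * f x)‖ ≤ 1 * |β - α| := this
      _ = β - α := by rw [one_mul, _root_.abs_of_nonneg (by linarith : (0:ℝ) ≤ β - α)]
      _ ≤ 2 * δ := hmidlen
  calc ‖∫ x in a..b, Complex.exp (Complex.I * lam * f x)‖
      = ‖(∫ x in a..α, Complex.exp (Complex.I * lam * f x))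
        + (∫ x in α..β, Complex.exp (Complex.I * lam * f x))
        + (∫ x in β..b, Complex.exp (Complex.I * lam * f x))‖ := by rw [e1, e2]
    _ ≤ ‖(∫ x in a..α, Complex.exp (Complex.I * lam * f x))
        + (∫ x in α..β, Complex.exp (Complex.I * lam * f x))‖
        + ‖∫ x in β..b, Complex.exp (Complex.I * lam * f x)‖ := norm_add_le _ _
    _ ≤ ‖∫ x in a..α, Complex.exp (Complex.I * lam * f x)‖
        + ‖∫ x in α..β, Complex.exp (Complex.I * lam * f x)‖
        + ‖∫ x in β..b, Complex.exp (Complex.I * lam * f x)‖ := by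
          gcongr; exact norm_add_le _ _
    _ ≤ M + 2 * δ + M := by gcongr
    _ = 2 * δ + 2 * M := by ring


lemma vdc_one' {f g φ : ℝ → ℝ} {a b μ lam : ℝ} (hab : a ≤ b) (hμ : 0 < μ) (hlam : 0 < lam)
    (hf : ∀ x ∈ Icc a b, HasDerivWithinAt f (g x) (Icc a b) x)
    (hg : ∀ x ∈ Icc a b, HasDerivWithinAt g (φ x) (Icc a b) x)
    (hφc : ContinuousOn φ (Icc a b))
    (hμg : ∀ x ∈ Icc a b, g x ≤ -μ)
    (hsign : (∀ x ∈ Icc a b, 0 ≤ φ x) ∨ (∀ x ∈ Icc a b, φ x ≤ 0)) :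
    ‖∫ x in a..b, Complex.exp (Complex.I * lam * f x)‖ ≤ 3 / (lam * μ) := by
  have h1 : ‖∫ x in a..b, Complex.exp (Complex.I * lam * ((-(f x)) : ℝ))‖ ≤ 3 / (lam * μ) := by
    apply vdc_one (g := fun x => -g x) (φ := fun x => -φ x) hab hμ hlam
    · exact fun x hx => (hf x hx).neg
    · exact fun x hx => (hg x hx).neg
    · exact hφc.neg
    · intro x hx; linarith [hμg x hx]
    · rcases hsign with h | h
      · exact Or.inr (fun x hx => by simpa using neg_nonpos_of_nonneg (h x hx))
      · exact Or.inl (fun x hx => by simpa using neg_nonneg_of_nonpos (h x hx))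
  rwa [my_conj f a b lam] at h1

lemma vdc_two {f : ℝ → ℝ} {a b lam : ℝ} (hab : a ≤ b) (hlam : 0 < lam)
    (hfC : ContDiffOn ℝ 2 f (Icc a b))
    (hf2 : ∀ x ∈ Icc a b, 1 ≤ iteratedDerivWithin 2 f (Icc a b) x) :
    ‖∫ x in a..b, Complex.exp (Complex.I * lam * f x)‖ ≤ 8 * lam ^ (-(1:ℝ)/2) := by
  rcases eq_or_lt_of_le hab with rfl | hlt
  · simp only [intervalIntegral.integral_same, norm_zero]
    positivity
  have hu : UniqueDiffOn ℝ (Icc a b) := uniqueDiffOn_Icc hlt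
  set δ : ℝ := lam ^ (-(1:ℝ)/2) with hδdef
  have hδ : 0 < δ := Real.rpow_pos_of_pos hlam _
  set h : ℝ → ℝ := iteratedDerivWithin 1 f (Icc a b) with hhdef
  set H : ℝ → ℝ := iteratedDerivWithin 2 f (Icc a b) with hHdef
  have hh' : ∀ x ∈ Icc a b, HasDerivWithinAt h (H x) (Icc a b) x := by
    intro x hx
    have hd : DifferentiableWithinAt ℝ h (Icc a b) x :=
      hfC.differentiableOn_iteratedDerivWithin (by norm_num) hu x hx
    have := hd.hasDerivWithinAt
    rwa [show derivWithin h (Icc a b) x = H x from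
      (congrFun iteratedDerivWithin_succ x).symm] at this
  have hf' : ∀ x ∈ Icc a b, HasDerivWithinAt f (h x) (Icc a b) x := by
    intro x hx
    have hd : DifferentiableWithinAt ℝ f (Icc a b) x :=
      (hfC.differentiableOn (by norm_num)) x hx
    have := hd.hasDerivWithinAt
    rwa [show derivWithin f (Icc a b) x = h x from
      (congrFun iteratedDerivWithin_one x).symm] at this
  have hHc : ContinuousOn H (Icc a b) :=
    hfC.continuousOn_iteratedDerivWithin (le_refl _) hu
  have hhc : ContinuousOn h (Icc a b) := fun x hx => (hh' x hx).continuousWithinAt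
  have hfc : ContinuousOn f (Icc a b) := fun x hx => (hf' x hx).continuousWithinAt
  have hgap := my_gap hh' hf2
  have hM : (0:ℝ) ≤ 3 / (lam * δ) := by positivity
  have hside : ∀ a' b', a ≤ a' → a' ≤ b' → b' ≤ b →
      ((∀ x ∈ Icc a' b', δ ≤ h x) ∨ (∀ x ∈ Icc a' b', h x ≤ -δ)) →
      ‖∫ x in a'..b', Complex.exp (Complex.I * lam * f x)‖ ≤ 3 / (lam * δ) := by
    intro a' b' ha' hab' hb' hcase
    have hsub : Icc a' b' ⊆ Icc a b := Icc_subset_Icc ha' hb'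
    rcases hcase with hr | hl
    · exact vdc_one hab' hδ hlam
        (fun x hx => (hf' x (hsub hx)).mono hsub)
        (fun x hx => (hh' x (hsub hx)).mono hsub)
        (hHc.mono hsub) hr
        (Or.inl (fun x hx => le_trans zero_le_one (hf2 x (hsub hx))))
    · exact vdc_one' hab' hδ hlam
        (fun x hx => (hf' x (hsub hx)).mono hsub)
        (fun x hx => (hh' x (hsub hx)).mono hsub)
        (hHc.mono hsub) hl
        (Or.inl (fun x hx => le_trans zero_le_one (hf2 x (hsub hx))))
  have hmain := split_core hδ hab hM hfc hhc hgap hside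
  have harith : 2 * δ + 2 * (3 / (lam * δ)) = 8 * lam ^ (-(1:ℝ)/2) := by
    have h1 : lam * δ = lam ^ ((1:ℝ)/2) := by
      rw [hδdef]
      rw [show lam * lam ^ (-(1:ℝ)/2) = lam ^ (1:ℝ) * lam ^ (-(1:ℝ)/2) by
        rw [Real.rpow_one], ← Real.rpow_add hlam]
      norm_num
    rw [h1, show (3:ℝ) / lam ^ ((1:ℝ)/2) = 3 * (lam ^ ((1:ℝ)/2))⁻¹ by ring,
      ← Real.rpow_neg hlam.le]
    rw [hδdef]
    rw [show -((1:ℝ)/2) = -(1:ℝ)/2 by ring]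
    ring
  rw [harith] at hmain
  exact hmain

lemma vdc_step (j : ℕ) (hj : 2 ≤ j) (c : ℝ) (hc : 0 < c)
    (IH : ∀ (f : ℝ → ℝ) (a b : ℝ), a ≤ b → ContDiffOn ℝ j f (Icc a b) →
      (∀ x ∈ Icc a b, 1 ≤ iteratedDerivWithin j f (Icc a b) x) →
      ∀ lam : ℝ, 0 < lam →
        ‖∫ x in a..b, Complex.exp (Complex.I * lam * f x)‖ ≤ c * lam ^ (-(1:ℝ)/j))
    {f : ℝ → ℝ} {a b lam : ℝ} (hab : a ≤ b) (hlam : 0 < lam)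
    (hfC : ContDiffOn ℝ (j+1) f (Icc a b))
    (hf2 : ∀ x ∈ Icc a b, 1 ≤ iteratedDerivWithin (j+1) f (Icc a b) x) :
    ‖∫ x in a..b, Complex.exp (Complex.I * lam * f x)‖
      ≤ (2 + 2*c) * lam ^ (-(1:ℝ)/((j:ℝ)+1)) := by
  have hjR : (0:ℝ) < (j:ℝ) := by
    have : 0 < j := lt_of_lt_of_le (by norm_num) hj
    exact_mod_cast this
  rcases eq_or_lt_of_le hab with rfl | hlt
  · simp only [intervalIntegral.integral_same, norm_zero]
    positivity
  have hu : UniqueDiffOn ℝ (Icc a b) := uniqueDiffOn_Icc hlt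
  set δ : ℝ := lam ^ (-(1:ℝ)/((j:ℝ)+1)) with hδdef
  have hδ : 0 < δ := Real.rpow_pos_of_pos hlam _
  have hlamδ : 0 < lam * δ := mul_pos hlam hδ
  set h : ℝ → ℝ := iteratedDerivWithin j f (Icc a b) with hhdef
  set H : ℝ → ℝ := iteratedDerivWithin (j+1) f (Icc a b) with hHdef
  have hh' : ∀ x ∈ Icc a b, HasDerivWithinAt h (H x) (Icc a b) x := by
    intro x hx
    have hd : DifferentiableWithinAt ℝ h (Icc a b) x :=
      hfC.differentiableOn_iteratedDerivWithin (by exact_mod_cast Nat.lt_succ_self j) hu x hx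
    have := hd.hasDerivWithinAt
    rwa [show derivWithin h (Icc a b) x = H x from
      (congrFun iteratedDerivWithin_succ x).symm] at this
  have hhc : ContinuousOn h (Icc a b) := fun x hx => (hh' x hx).continuousWithinAt
  have hfc : ContinuousOn f (Icc a b) :=
    hfC.continuousOn
  have hgap := my_gap hh' hf2
  set M : ℝ := c * (lam * δ) ^ (-(1:ℝ)/(j:ℝ)) with hMdef
  have hM : (0:ℝ) ≤ M := by
    have := Real.rpow_pos_of_pos hlamδ (-(1:ℝ)/(j:ℝ))
    positivity
  have hside : ∀ a' b', a ≤ a' → a' ≤ b' → b' ≤ b →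
      ((∀ x ∈ Icc a' b', δ ≤ h x) ∨ (∀ x ∈ Icc a' b', h x ≤ -δ)) →
      ‖∫ x in a'..b', Complex.exp (Complex.I * lam * f x)‖ ≤ M := by
    intro a' b' ha' hab' hb' hcase
    rcases eq_or_lt_of_le hab' with rfl | hlt'
    · simp only [intervalIntegral.integral_same, norm_zero]
      exact hM
    have hu' : UniqueDiffOn ℝ (Icc a' b') := uniqueDiffOn_Icc hlt'
    have hsub : Icc a' b' ⊆ Icc a b := Icc_subset_Icc ha' hb'
    have hiter : ∀ x ∈ Icc a' b',
        iteratedDerivWithin j f (Icc a' b') x = h x := by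
      intro x hx
      exact my_iter_subset hsub hu' hu (Nat.le_succ j) hfC x hx
    have hCsub : ContDiffOn ℝ j f (Icc a' b') :=
      (hfC.mono hsub).of_le (by exact_mod_cast Nat.le_succ j)
    have hδC : ((δ:ℝ):ℂ) ≠ 0 := by exact_mod_cast hδ.ne'
    rcases hcase with hr | hl
    · -- use f̃ = δ⁻¹ • f
      have hC2 : ContDiffOn ℝ j (δ⁻¹ • f) (Icc a' b') := hCsub.const_smul δ⁻¹
      have hlow : ∀ x ∈ Icc a' b',
          1 ≤ iteratedDerivWithin j (δ⁻¹ • f) (Icc a' b') x := by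
        intro x hx
        rw [iteratedDerivWithin_const_smul hx hu' δ⁻¹ (hCsub x hx), hiter x hx,
          smul_eq_mul]
        calc (1:ℝ) = δ⁻¹ * δ := by field_simp
          _ ≤ δ⁻¹ * h x := by
              apply mul_le_mul_of_nonneg_left (hr x hx) (by positivity)
      have hres := IH (δ⁻¹ • f) a' b' hab' hC2 hlow (lam * δ) hlamδ
      have hEq : ∀ x : ℝ, Complex.I * ((lam * δ : ℝ) : ℂ) * (((δ⁻¹ • f) x : ℝ) : ℂ)
          = Complex.I * lam * f x := by
        intro x
        simp only [Pi.smul_apply, smul_eq_mul]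
        push_cast
        field_simp
      simp_rw [hEq] at hres
      exact hres
    · -- use f̃ = (-δ⁻¹) • f
      have hC2 : ContDiffOn ℝ j ((-δ⁻¹) • f) (Icc a' b') := hCsub.const_smul (-δ⁻¹)
      have hlow : ∀ x ∈ Icc a' b',
          1 ≤ iteratedDerivWithin j ((-δ⁻¹) • f) (Icc a' b') x := by
        intro x hx
        rw [iteratedDerivWithin_const_smul hx hu' (-δ⁻¹) (hCsub x hx), hiter x hx,
          smul_eq_mul]
        have h1 : δ ≤ -h x := by linarith [hl x hx]
        calc (1:ℝ) = δ⁻¹ * δ := by field_simp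
          _ ≤ δ⁻¹ * (-h x) := by
              apply mul_le_mul_of_nonneg_left h1 (by positivity)
          _ = -δ⁻¹ * h x := by ring
      have hres := IH ((-δ⁻¹) • f) a' b' hab' hC2 hlow (lam * δ) hlamδ
      have hEq : ∀ x : ℝ, Complex.I * ((lam * δ : ℝ) : ℂ) * ((((-δ⁻¹) • f) x : ℝ) : ℂ)
          = Complex.I * lam * ((-(f x) : ℝ) : ℂ) := by
        intro x
        simp only [Pi.smul_apply, smul_eq_mul]
        push_cast
        field_simp
      simp_rw [hEq] at hres
      rwa [my_conj f a' b' lam] at hres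
  have hmain := split_core hδ hab hM hfc hhc hgap hside
  have harith : 2 * δ + 2 * M = (2 + 2*c) * lam ^ (-(1:ℝ)/((j:ℝ)+1)) := by
    have hj1 : (0:ℝ) < (j:ℝ) + 1 := by positivity
    have h1 : lam * δ = lam ^ ((j:ℝ)/((j:ℝ)+1)) := by
      rw [hδdef]
      rw [show lam * lam ^ (-(1:ℝ)/((j:ℝ)+1)) = lam ^ (1:ℝ) * lam ^ (-(1:ℝ)/((j:ℝ)+1)) by
        rw [Real.rpow_one], ← Real.rpow_add hlam]
      congr 1
      field_simp
      ring
    have h2 : M = c * δ := by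
      rw [hMdef, h1, ← Real.rpow_mul hlam.le]
      rw [show ((j:ℝ)/((j:ℝ)+1)) * (-(1:ℝ)/(j:ℝ)) = -(1:ℝ)/((j:ℝ)+1) by
        field_simp]
    rw [h2, hδdef]
    ring
  rw [harith] at hmain
  exact hmain

/-- Van der Corput lemma, k-th derivative case (k ≥ 2): a constant depending
only on k, uniform in f, a, b. -/
theorem vanDerCorput_higher (k : ℕ) (hk : 2 ≤ k) :
    ∃ c : ℝ, 0 < c ∧ ∀ (f : ℝ → ℝ) (a b : ℝ), a ≤ b →
      ContDiffOn ℝ k f (Set.Icc a b) →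
      (∀ x ∈ Set.Icc a b, 1 ≤ iteratedDerivWithin k f (Set.Icc a b) x) →
      ∀ lam : ℝ, 0 < lam →
        ‖∫ x in a..b, Complex.exp (Complex.I * lam * f x)‖ ≤ c * lam ^ (-(1 : ℝ) / k) := by
  induction k, hk using Nat.le_induction with
  | base =>
    refine ⟨8, by norm_num, fun f a b hab hC hlow lam hlam => ?_⟩
    have := vdc_two hab hlam hC hlow
    have hcast : ((2:ℕ):ℝ) = (2:ℝ) := by norm_num
    rw [show (-(1:ℝ)/((2:ℕ):ℝ)) = (-(1:ℝ)/2) by rw [hcast]]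
    exact this
  | succ j hj IHex =>
    obtain ⟨c, hc, Hind⟩ := IHex
    refine ⟨2 + 2*c, by positivity, fun f a b hab hC hlow lam hlam => ?_⟩
    have := vdc_step j hj c hc Hind hab hlam hC hlow
    have hcast : ((j+1:ℕ):ℝ) = (j:ℝ) + 1 := by push_cast; ring
    rw [show (-(1:ℝ)/((j+1:ℕ):ℝ)) = (-(1:ℝ)/((j:ℝ)+1)) by rw [hcast]]
    exact this
end

section
/- Let f : ℝ → ℝ be C^1 on [a,b] with f'(x) ≥ 1 for all x ∈ [a,b] and f' monotone on [a,b]. Then for all λ > 0, |∫_a^b e^{iλ f(x)} dx| ≤ 3 λ^{-1}. -/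
open Real Complex intervalIntegral Set MeasureTheory

/-- Inner bound: integral of `ψ = G'` over an order-connected subset of `Ioc a b`
is bounded by `2 * lam⁻¹` if `‖G‖ ≤ lam⁻¹` everywhere. -/
lemma vdc_inner_bound {G ψ : ℝ → ℂ} {a b lam : ℝ} (hlam : 0 < lam)
    (hG : ∀ x ∈ Set.Icc a b, HasDerivWithinAt G (ψ x) (Set.Icc a b) x)
    (hGn : ∀ x, ‖G x‖ ≤ lam⁻¹)
    (hψ : Continuous ψ)
    {S : Set ℝ} (hS : S ⊆ Set.Ioc a b) (hSo : S.OrdConnected) :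
    ‖∫ x in S, ψ x‖ ≤ 2 * lam⁻¹ := by
  rcases S.eq_empty_or_nonempty with hE | hne
  · simp only [hE, Measure.restrict_empty, integral_zero_measure, norm_zero]
    positivity
  set α := sInf S with hα
  set β := sSup S with hβ
  have hbddb : BddBelow S := ⟨a, fun x hx => (hS hx).1.le⟩
  have hbdda : BddAbove S := ⟨b, fun x hx => (hS hx).2⟩
  obtain ⟨x0, hx0⟩ := hne
  have hαa : a ≤ α := le_csInf ⟨x0, hx0⟩ fun x hx => (hS hx).1.le
  have hβb : β ≤ b := csSup_le ⟨x0, hx0⟩ fun x hx => (hS hx).2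
  have hαβ : α ≤ β := le_trans (csInf_le hbddb hx0) (le_csSup hbdda hx0)
  have hsub : Set.Ioo α β ⊆ S := by
    intro z hz
    obtain ⟨x, hxS, hxz⟩ := exists_lt_of_csInf_lt ⟨x0, hx0⟩ hz.1
    obtain ⟨y, hyS, hzy⟩ := exists_lt_of_lt_csSup ⟨x0, hx0⟩ hz.2
    exact hSo.out hxS hyS ⟨hxz.le, hzy.le⟩
  have hsup : S ⊆ Set.Icc α β := fun z hz => ⟨csInf_le hbddb hz, le_csSup hbdda hz⟩
  have hae : S =ᵐ[volume] Set.Ioo α β := by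
    rw [MeasureTheory.ae_eq_set]
    constructor
    · refine measure_mono_null (fun z hz => ?_) (Set.Finite.measure_zero
        ((Set.finite_singleton β).insert α) volume)
      have hz1 := hsup hz.1
      have hz2 := hz.2
      by_contra hmem
      simp only [Set.mem_insert_iff, Set.mem_singleton_iff] at hmem
      push_neg at hmem
      exact hz2 ⟨lt_of_le_of_ne hz1.1 (Ne.symm hmem.1), lt_of_le_of_ne hz1.2 hmem.2⟩
    · rw [Set.diff_eq_empty.2 hsub]; simp
  rw [setIntegral_congr_set hae, ← MeasureTheory.integral_Ioc_eq_integral_Ioo,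
    ← intervalIntegral.integral_of_le hαβ]
  have hIcc : Set.Icc α β ⊆ Set.Icc a b := Set.Icc_subset_Icc hαa hβb
  have hGc : ContinuousOn G (Set.Icc α β) :=
    fun x hx => ((hG x (hIcc hx)).continuousWithinAt).mono hIcc
  have hderiv : ∀ x ∈ Set.Ioo α β, HasDerivWithinAt G (ψ x) (Set.Ioi x) x := by
    intro x hx
    have hx' : x ∈ Set.Ioo a b := ⟨lt_of_le_of_lt hαa hx.1, lt_of_lt_of_le hx.2 hβb⟩
    exact ((hG x (Set.Ioo_subset_Icc_self hx')).hasDerivAt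
      (Icc_mem_nhds hx'.1 hx'.2)).hasDerivWithinAt
  rw [intervalIntegral.integral_eq_sub_of_hasDeriv_right_of_le hαβ hGc hderiv
    (hψ.intervalIntegrable α β)]
  calc ‖G β - G α‖ ≤ ‖G β‖ + ‖G α‖ := norm_sub_le _ _
    _ ≤ lam⁻¹ + lam⁻¹ := add_le_add (hGn β) (hGn α)
    _ = 2 * lam⁻¹ := by ring

/-- Van der Corput lemma, first-derivative case: f C¹ on [a,b], f' ≥ 1 and f' monotone
imply the bound 3/λ, uniformly in f, a, b. -/
theorem vanDerCorput_first (f : ℝ → ℝ) (a b : ℝ) (hab : a ≤ b)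
    (hf : ContDiffOn ℝ 1 f (Set.Icc a b))
    (hlow : ∀ x ∈ Set.Icc a b, 1 ≤ derivWithin f (Set.Icc a b) x)
    (hmono : MonotoneOn (derivWithin f (Set.Icc a b)) (Set.Icc a b) ∨
      AntitoneOn (derivWithin f (Set.Icc a b)) (Set.Icc a b)) :
    ∀ lam : ℝ, 0 < lam →
      ‖∫ x in a..b, Complex.exp (Complex.I * lam * f x)‖ ≤ 3 * lam⁻¹ := by
  intro lam hlam
  rcases eq_or_lt_of_le hab with rfl | hlt
  · simp [intervalIntegral.integral_same]
    positivity
  set φ : ℝ → ℝ := derivWithin f (Set.Icc a b) with hφdef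
  have uD : UniqueDiffOn ℝ (Set.Icc a b) := uniqueDiffOn_Icc hlt
  have hφc : ContinuousOn φ (Set.Icc a b) := hf.continuousOn_derivWithin uD le_rfl
  have hfc : ContinuousOn f (Set.Icc a b) := hf.continuousOn
  -- clamp function
  have hcont_c : Continuous (fun x : ℝ => max a (min b x)) :=
    continuous_const.max (continuous_const.min continuous_id)
  set c : ℝ → ℝ := fun x => max a (min b x) with hcdef
  have hcmem : ∀ x, c x ∈ Set.Icc a b :=
    fun x => ⟨le_max_left _ _, max_le hab (min_le_left _ _)⟩
  have hcid : ∀ x ∈ Set.Icc a b, c x = x := by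
    intro x hx
    simp only [hcdef]
    rw [min_eq_right hx.2, max_eq_right hx.1]
  have hphic : Continuous (fun x => φ (c x)) := hφc.comp_continuous hcont_c hcmem
  have hphi1 : ∀ x, 1 ≤ φ (c x) := fun x => hlow _ (hcmem x)
  have hphi0 : ∀ x, (0:ℝ) < φ (c x) := fun x => lt_of_lt_of_le one_pos (hphi1 x)
  set hsm : ℝ → ℝ := fun x => (φ (c x))⁻¹ with hsmdef
  have hsmc : Continuous hsm := hphic.inv₀ fun x => (hphi0 x).ne'
  have hsmpos : ∀ x, 0 < hsm x := fun x => inv_pos.2 (hphi0 x)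
  have hsmle1 : ∀ x, hsm x ≤ 1 := fun x => by
    rw [hsmdef]; exact inv_le_one_of_one_le₀ (hphi1 x)
  set ψ : ℝ → ℂ := fun x => (φ (c x) : ℂ) * Complex.exp (Complex.I * lam * f (c x))
    with hψdef
  have hψc : Continuous ψ := by
    apply Continuous.mul
    · exact Complex.continuous_ofReal.comp hphic
    · exact Complex.continuous_exp.comp <| continuous_const.mul <|
        Complex.continuous_ofReal.comp (hfc.comp_continuous hcont_c hcmem)
  set G : ℝ → ℂ := fun x => Complex.exp (Complex.I * lam * f x) * (Complex.I * lam)⁻¹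
    with hGdef
  have hIlam : (Complex.I * lam : ℂ) ≠ 0 :=
    mul_ne_zero Complex.I_ne_zero (Complex.ofReal_ne_zero.2 hlam.ne')
  have hexp_norm : ∀ y : ℝ, ‖Complex.exp (Complex.I * lam * (y:ℂ))‖ = 1 := by
    intro y
    rw [Complex.norm_exp]
    simp [mul_comm, mul_assoc]
  have hGn : ∀ x, ‖G x‖ ≤ lam⁻¹ := by
    intro x
    rw [hGdef]
    simp only [norm_mul, hexp_norm (f x), one_mul, norm_inv]
    rw [Complex.norm_I, one_mul, Complex.norm_real,
      Real.norm_eq_abs, abs_of_pos hlam]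
  have hG : ∀ x ∈ Set.Icc a b, HasDerivWithinAt G (ψ x) (Set.Icc a b) x := by
    intro x hx
    have hfd : HasDerivWithinAt f (φ x) (Set.Icc a b) x :=
      (hf.differentiableOn one_ne_zero x hx).hasDerivWithinAt
    have hre : HasDerivWithinAt (fun y => (f y : ℂ)) (φ x : ℂ) (Set.Icc a b) x := by
      simpa using hfd.ofReal_comp
    have h1 : HasDerivWithinAt (fun y => Complex.I * lam * (f y : ℂ))
        (Complex.I * lam * (φ x : ℂ)) (Set.Icc a b) x := hre.const_mul _
    have h2 := (h1.cexp).mul_const (Complex.I * lam)⁻¹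
    have heq : Complex.exp (Complex.I * lam * (f x : ℂ)) * (Complex.I * lam * (φ x : ℂ))
        * (Complex.I * lam)⁻¹ = ψ x := by
      rw [hψdef]
      simp only [hcid x hx]
      field_simp
      exact mul_div_cancel_left₀ _ (Complex.ofReal_ne_zero.2 hlam.ne')
    rw [heq] at h2
    exact h2
  -- pointwise identity on Icc a b
  have hpt : ∀ x ∈ Set.Icc a b,
      Complex.exp (Complex.I * lam * f x) = (hsm x : ℂ) * ψ x := by
    intro x hx
    have hφx : φ x ≠ 0 := (lt_of_lt_of_le one_pos (hlow x hx)).ne'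
    rw [hψdef, hsmdef]
    simp only [hcid x hx]
    rw [← mul_assoc, ← Complex.ofReal_mul, inv_mul_cancel₀ hφx, Complex.ofReal_one, one_mul]
  -- bound for ψ
  obtain ⟨xM, hxM, hM⟩ := isCompact_Icc.exists_isMaxOn (Set.nonempty_Icc.2 hab) hφc
  set M := φ xM with hMdef
  have hψbd : ∀ x, ‖ψ x‖ ≤ M := by
    intro x
    rw [hψdef]
    simp only [norm_mul, hexp_norm (f (c x)), mul_one, Complex.norm_real,
      Real.norm_eq_abs, abs_of_pos (hphi0 x)]
    exact hM (hcmem x)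
  -- measures
  set μ := volume.restrict (Set.Ioc a b) with hμdef
  set ν := volume.restrict (Set.Ioc (0:ℝ) 1) with hνdef
  haveI : IsFiniteMeasure μ := ⟨by simpa [hμdef] using measure_Ioc_lt_top⟩
  haveI : IsFiniteMeasure ν := ⟨by simpa [hνdef] using measure_Ioc_lt_top⟩
  -- layer-cake representation
  have hlayer : ∀ x, (hsm x : ℂ) * ψ x
      = ∫ t in Set.Ioc (0:ℝ) 1, (if t ≤ hsm x then ψ x else 0) := by
    intro x
    have : (fun t => if t ≤ hsm x then ψ x else 0)
        = (Set.Iic (hsm x)).indicator (fun _ => ψ x) := by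
      ext t; by_cases h : t ≤ hsm x <;> simp [Set.indicator, h]
    rw [this, setIntegral_indicator measurableSet_Iic, Set.Ioc_inter_Iic,
      min_eq_right (hsmle1 x), setIntegral_const, Real.volume_real_Ioc_of_le (hsmpos x).le, sub_zero,
      Complex.real_smul]
  -- Fubini
  set K : ℝ → ℝ → ℂ := fun x t => if t ≤ hsm x then ψ x else 0 with hKdef
  have hKmeas : StronglyMeasurable (Function.uncurry K) := by
    have hset : MeasurableSet {p : ℝ × ℝ | p.2 ≤ hsm p.1} :=
      (isClosed_le continuous_snd (hsmc.comp continuous_fst)).measurableSet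
    have : Function.uncurry K = {p : ℝ × ℝ | p.2 ≤ hsm p.1}.indicator (fun p => ψ p.1) := by
      ext p
      by_cases h : p.2 ≤ hsm p.1 <;> simp [Function.uncurry, hKdef, Set.indicator, h]
    rw [this]
    exact (hψc.comp continuous_fst).stronglyMeasurable.indicator hset
  have hKint : Integrable (Function.uncurry K) (μ.prod ν) := by
    refine Integrable.mono' (integrable_const M) hKmeas.aestronglyMeasurable ?_
    filter_upwards with p
    rcases le_or_gt p.2 (hsm p.1) with h | h
    · simp only [Function.uncurry, hKdef, if_pos h]
      exact hψbd p.1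
    · simp only [Function.uncurry, hKdef, if_neg (not_le.2 h), norm_zero]
      exact le_trans (norm_nonneg (ψ p.1)) (hψbd p.1)
  have hswap : (∫ x, ∫ t, K x t ∂ν ∂μ) = ∫ t, ∫ x, K x t ∂μ ∂ν :=
    MeasureTheory.integral_integral_swap hKint
  -- rewrite the target integral
  have hstep1 : (∫ x in a..b, Complex.exp (Complex.I * lam * f x))
      = ∫ x, ∫ t, K x t ∂ν ∂μ := by
    rw [intervalIntegral.integral_of_le hab, ← hμdef]
    refine setIntegral_congr_fun measurableSet_Ioc fun x hx => ?_
    rw [hpt x (Set.Ioc_subset_Icc_self hx), hlayer x, hνdef]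
  rw [hstep1, hswap]
  -- bound the outer integral
  have hinner : ∀ t, t ∈ Set.Ioc (0:ℝ) 1 → ‖∫ x, K x t ∂μ‖ ≤ 2 * lam⁻¹ := by
    intro t _
    have hKind : (fun x => K x t) = {x : ℝ | t ≤ hsm x}.indicator ψ := by
      ext x
      by_cases h : t ≤ hsm x <;> simp [hKdef, Set.indicator, h]
    have hsetm : MeasurableSet {x : ℝ | t ≤ hsm x} :=
      (isClosed_le continuous_const hsmc).measurableSet
    rw [hμdef, hKind, setIntegral_indicator hsetm]
    set S := Set.Ioc a b ∩ {x : ℝ | t ≤ hsm x} with hSdef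
    have hSsub : S ⊆ Set.Ioc a b := Set.inter_subset_left
    have hSord : S.OrdConnected := by
      constructor
      intro x hx y hy z hz
      have hxI : x ∈ Set.Icc a b := Set.Ioc_subset_Icc_self hx.1
      have hyI : y ∈ Set.Icc a b := Set.Ioc_subset_Icc_self hy.1
      have hzI : z ∈ Set.Icc a b := ⟨le_trans hxI.1 hz.1, le_trans hz.2 hyI.2⟩
      refine ⟨⟨lt_of_lt_of_le hx.1.1 hz.1, le_trans hz.2 hy.1.2⟩, ?_⟩
      have hcz : c z = z := hcid z hzI
      have hcx : c x = x := hcid x hxI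
      have hcy : c y = y := hcid y hyI
      rcases hmono with hm | hm
      · -- φ monotone ⇒ hsm antitone, use value at y
        have hφzy : φ z ≤ φ y := hm hzI hyI hz.2
        have : hsm y ≤ hsm z := by
          simp only [hsmdef, hcz, hcy]
          exact inv_anti₀ (lt_of_lt_of_le one_pos (by
            simpa [hcz] using hphi1 z)) hφzy
        exact le_trans hy.2 (by simpa [Set.mem_setOf_eq] using this)
      · -- φ antitone ⇒ hsm monotone, use value at x
        have hφzx : φ z ≤ φ x := hm hxI hzI hz.1
        have : hsm x ≤ hsm z := by
          simp only [hsmdef, hcz, hcx]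
          exact inv_anti₀ (lt_of_lt_of_le one_pos (by
            simpa [hcz] using hphi1 z)) hφzx
        exact le_trans hx.2 (by simpa [Set.mem_setOf_eq] using this)
    exact vdc_inner_bound hlam hG hGn hψc hSsub hSord
  have hbound : ‖∫ t, ∫ x, K x t ∂μ ∂ν‖ ≤ 2 * lam⁻¹ * (ν Set.univ).toReal := by
    apply MeasureTheory.norm_integral_le_of_norm_le_const
    rw [hνdef]
    rw [MeasureTheory.ae_restrict_iff' measurableSet_Ioc]
    filter_upwards with t ht
    exact hinner t ht
  have hν1 : (ν Set.univ).toReal = 1 := by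
    rw [hνdef, Measure.restrict_apply_univ, Real.volume_Ioc]
    norm_num
  rw [hν1, mul_one] at hbound
  refine le_trans hbound ?_
  have : (0:ℝ) ≤ lam⁻¹ := by positivity
  linarith
end

section
/- Let f : ℝ → ℝ satisfy the hypotheses of the van der Corput lemma with k-th derivative ≥ 1 on [a,b] (and f' monotone if k = 1), and let φ : [a,b] → ℂ be C^1. Then |∫_a^b e^{iλ f(x)} φ(x) dx| ≤ c_k λ^{-1/k} (|φ(b)| + ∫_a^b |φ'(x)| dx) for all λ > 0, where c_k depends only on k. -/
open Real Complex intervalIntegral Set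
open MeasureTheory


lemma iterDW_subset {f : ℝ → ℝ} {s t : Set ℝ} (hst : s ⊆ t) (hs : UniqueDiffOn ℝ s)
    (ht : UniqueDiffOn ℝ t) {n : ℕ} (hf : ContDiffOn ℝ n f t) :
    ∀ k ≤ n, ∀ x ∈ s, iteratedDerivWithin k f s x = iteratedDerivWithin k f t x := by
  intro k hk
  induction k with
  | zero => intro x hx; simp [iteratedDerivWithin_zero]
  | succ m ih =>
    intro x hx
    have hm : m ≤ n := le_trans (Nat.le_succ m) hk
    rw [iteratedDerivWithin_succ,
        iteratedDerivWithin_succ]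
    have hdiff : DifferentiableWithinAt ℝ (iteratedDerivWithin m f t) t x :=
      hf.differentiableOn_iteratedDerivWithin
        (by exact_mod_cast lt_of_lt_of_le (Nat.lt_succ_self m) hk) ht x (hst hx)
    calc derivWithin (iteratedDerivWithin m f s) s x
        = derivWithin (iteratedDerivWithin m f t) s x := by
          apply derivWithin_congr
          · intro y hy; exact ih hm y hy
          · exact ih hm x hx
      _ = derivWithin (iteratedDerivWithin m f t) t x :=
          derivWithin_subset hst (hs.uniqueDiffWithinAt hx) hdiff


lemma Ilam_ne {lam : ℝ} (hlam : 0 < lam) : Complex.I * lam ≠ 0 := by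
  simp [Complex.ext_iff, hlam.ne']

lemma ftc_osc {f : ℝ → ℝ} {a b : ℝ} (hab : a < b) (hf : ContDiffOn ℝ 1 f (Set.Icc a b))
    {lam : ℝ} (hlam : 0 < lam) {u v : ℝ} (hu : u ∈ Set.Icc a b) (hv : v ∈ Set.Icc a b)
    (huv : u ≤ v) :
    ∫ x in u..v, Complex.exp (Complex.I * lam * f x)
        * Complex.ofReal (derivWithin f (Set.Icc a b) x)
      = Complex.exp (Complex.I * lam * f v) / (Complex.I * lam)
        - Complex.exp (Complex.I * lam * f u) / (Complex.I * lam) := by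
  have hne := Ilam_ne hlam
  have hud : UniqueDiffOn ℝ (Set.Icc a b) := uniqueDiffOn_Icc hab
  have hfc : ContinuousOn f (Set.Icc a b) := hf.continuousOn
  have hf'c : ContinuousOn (derivWithin f (Set.Icc a b)) (Set.Icc a b) :=
    hf.continuousOn_derivWithin hud le_rfl
  set ψ : ℝ → ℂ := fun x => Complex.exp (Complex.I * lam * f x)
        * Complex.ofReal (derivWithin f (Set.Icc a b) x) with hψ
  have hsub : Set.Icc u v ⊆ Set.Icc a b := Set.Icc_subset_Icc hu.1 hv.2
  have hfC : ContinuousOn (fun x => Complex.I * lam * (f x : ℂ)) (Set.Icc a b) :=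
    continuousOn_const.mul (Complex.continuous_ofReal.comp_continuousOn hfc)
  have hψcab : ContinuousOn ψ (Set.Icc a b) :=
    hfC.cexp.mul (Complex.continuous_ofReal.comp_continuousOn hf'c)
  have hψc : ContinuousOn ψ (Set.Icc u v) := hψcab.mono hsub
  -- the primitive
  set G : ℝ → ℂ := fun x => Complex.exp (Complex.I * lam * f x) / (Complex.I * lam) with hG
  have hGc : ContinuousOn G (Set.Icc u v) := ((hfC.mono hsub).cexp).div_const _
  have hderiv : ∀ x ∈ Set.Ioo u v, HasDerivAt G (ψ x) x := by
    intro x hx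
    have hxab : x ∈ Set.Ioo a b := ⟨lt_of_le_of_lt hu.1 hx.1, lt_of_lt_of_le hx.2 hv.2⟩
    have hmem : Set.Icc a b ∈ nhds x := Icc_mem_nhds hxab.1 hxab.2
    have hdf : HasDerivAt f (derivWithin f (Set.Icc a b) x) x :=
      (((hf.differentiableOn one_ne_zero) x (hsub (Set.mem_Icc_of_Ioo hx))).hasDerivWithinAt).hasDerivAt
        hmem
    have h1 : HasDerivAt (fun y => (f y : ℂ)) (Complex.ofReal (derivWithin f (Set.Icc a b) x)) x :=
      hdf.ofReal_comp
    have h2 := (h1.const_mul (Complex.I * lam)).cexp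
    have h3 := h2.div_const (Complex.I * lam)
    refine h3.congr_deriv ?_
    simp only [hψ]
    rw [mul_div_assoc, mul_div_cancel_left₀ _ hne]
  have hint : IntervalIntegrable ψ volume u v := by
    rw [intervalIntegrable_iff_integrableOn_Icc_of_le huv]
    exact hψc.integrableOn_compact isCompact_Icc
  have := intervalIntegral.integral_eq_sub_of_hasDeriv_right_of_le huv hGc
    (fun x hx => (hderiv x hx).hasDerivWithinAt) hint
  simpa [hG] using this

lemma norm_exp_I_lam (lam r : ℝ) : ‖Complex.exp (Complex.I * lam * r)‖ = 1 := by
  have : Complex.I * lam * r = (lam * r : ℝ) * Complex.I := by push_cast; ring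
  rw [this]
  exact Complex.norm_exp_ofReal_mul_I _

-- inner bound: integral of the (extended) ψ over an order-connected piece of (a,b]
lemma inner_bound {f : ℝ → ℝ} {a b : ℝ} (hab : a < b) (hf : ContDiffOn ℝ 1 f (Set.Icc a b))
    {lam : ℝ} (hlam : 0 < lam) {ψ : ℝ → ℂ}
    (hψ : ∀ x ∈ Set.Icc a b, ψ x = Complex.exp (Complex.I * lam * f x)
        * Complex.ofReal (derivWithin f (Set.Icc a b) x))
    {S : Set ℝ} (hSm : MeasurableSet S) (hS : S.OrdConnected) :
    ‖∫ x in Set.Ioc a b ∩ S, ψ x‖ ≤ 2 / lam := by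
  have h2lam : (0:ℝ) ≤ 2 / lam := by positivity
  set T := Set.Ioc a b ∩ S with hT
  rcases T.eq_empty_or_nonempty with hTe | hTne
  · rw [hTe]; simp [h2lam]
  have hTsub : T ⊆ Set.Icc a b := fun x hx => Set.Ioc_subset_Icc_self hx.1
  have hbdd : BddAbove T := (isCompact_Icc (a := a) (b := b)).bddAbove.mono hTsub
  have hbddb : BddBelow T := (isCompact_Icc (a := a) (b := b)).bddBelow.mono hTsub
  set u := sInf T with hu
  set v := sSup T with hv
  have huv : u ≤ v := csInf_le_csSup hTne hbddb hbdd
  have hau : a ≤ u := le_csInf hTne fun x hx => hx.1.1.le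
  have hvb : v ≤ b := csSup_le hTne fun x hx => hx.1.2
  have humem : u ∈ Set.Icc a b := ⟨hau, le_trans huv hvb⟩
  have hvmem : v ∈ Set.Icc a b := ⟨le_trans hau huv, hvb⟩
  have hTord : T.OrdConnected := (Set.ordConnected_Ioc).inter hS
  have hIoo : Set.Ioo u v ⊆ T := by
    intro x hx
    obtain ⟨p, hp, hpx⟩ := (csInf_lt_iff hbddb hTne).mp hx.1
    obtain ⟨q, hq, hxq⟩ := (lt_csSup_iff hbdd hTne).mp hx.2
    exact hTord.out hp hq ⟨hpx.le, hxq.le⟩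
  have hTIcc : T ⊆ Set.Icc u v := fun x hx => ⟨csInf_le hbddb hx, le_csSup hbdd hx⟩
  have hTm : MeasurableSet T := measurableSet_Ioc.inter hSm
  have haeq : T =ᵐ[volume] Set.Ioo u v := by
    rw [MeasureTheory.ae_eq_set]
    constructor
    · refine measure_mono_null (t := ({u, v} : Set ℝ)) (fun x hx => ?_)
        ((Set.Finite.insert u (Set.finite_singleton v)).measure_zero _)
      have hxI : x ∈ Set.Icc u v := hTIcc hx.1
      have hno : x ∉ Set.Ioo u v := hx.2
      rcases eq_or_lt_of_le hxI.1 with h | h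
      · exact Or.inl h.symm
      · rcases eq_or_lt_of_le hxI.2 with h2 | h2
        · exact Or.inr h2
        · exact absurd ⟨h, h2⟩ hno
    · have : Set.Ioo u v \ T = ∅ := Set.diff_eq_empty.mpr hIoo
      rw [this]; simp
  calc ‖∫ x in T, ψ x‖ = ‖∫ x in Set.Ioo u v, ψ x‖ := by
        rw [MeasureTheory.setIntegral_congr_set haeq]
    _ ≤ 2 / lam := by
        rw [← MeasureTheory.integral_Ioc_eq_integral_Ioo, ← intervalIntegral.integral_of_le huv]
        have hcong : ∀ x ∈ Set.uIcc u v, ψ x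
            = Complex.exp (Complex.I * lam * f x)
                * Complex.ofReal (derivWithin f (Set.Icc a b) x) := by
          intro x hx
          rw [Set.uIcc_of_le huv] at hx
          exact hψ x ⟨le_trans hau hx.1, le_trans hx.2 hvb⟩
        rw [intervalIntegral.integral_congr hcong]
        rw [ftc_osc hab hf hlam humem hvmem huv]
        have hn : ∀ r : ℝ, ‖Complex.exp (Complex.I * lam * r) / (Complex.I * lam)‖ = 1 / lam := by
          intro r
          rw [norm_div, norm_exp_I_lam, norm_mul, Complex.norm_I, one_mul,
            Complex.norm_real, Real.norm_of_nonneg hlam.le]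
        calc ‖_ - _‖ ≤ _ := norm_sub_le _ _
          _ ≤ 2 / lam := by rw [hn, hn]; ring_nf; rfl

lemma vdc_base {f : ℝ → ℝ} {a b : ℝ} (hab : a ≤ b) (hf : ContDiffOn ℝ 1 f (Set.Icc a b))
    (hd : ∀ x ∈ Set.Icc a b, 1 ≤ derivWithin f (Set.Icc a b) x)
    (hm : MonotoneOn (derivWithin f (Set.Icc a b)) (Set.Icc a b) ∨
      AntitoneOn (derivWithin f (Set.Icc a b)) (Set.Icc a b))
    {lam : ℝ} (hlam : 0 < lam) :
    ‖∫ x in a..b, Complex.exp (Complex.I * lam * f x)‖ ≤ 2 / lam := by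
  rcases eq_or_lt_of_le hab with rfl | hab'
  · simp; positivity
  have hud : UniqueDiffOn ℝ (Set.Icc a b) := uniqueDiffOn_Icc hab'
  set f' := derivWithin f (Set.Icc a b) with hf'
  have hf'c : ContinuousOn f' (Set.Icc a b) := hf.continuousOn_derivWithin hud le_rfl
  -- clamp
  set cl : ℝ → ℝ := fun x => min b (max a x) with hcl
  have hclmem : ∀ x, cl x ∈ Set.Icc a b := fun x =>
    ⟨le_min hab (le_max_left a x), min_le_left _ _⟩
  have hclid : ∀ x ∈ Set.Icc a b, cl x = x := fun x hx => by
    simp [hcl, max_eq_right hx.1, min_eq_right hx.2]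
  have hclc : Continuous cl := continuous_const.min (continuous_const.max continuous_id)
  have hclm : Monotone cl := fun x y h => min_le_min le_rfl (max_le_max le_rfl h)
  set p : ℝ → ℝ := fun x => f' (cl x) with hp
  have hpc : Continuous p := hf'c.comp_continuous hclc hclmem
  have hp1 : ∀ x, 1 ≤ p x := fun x => hd _ (hclmem x)
  have hppos : ∀ x, 0 < p x := fun x => lt_of_lt_of_le one_pos (hp1 x)
  set g : ℝ → ℝ := fun x => (p x)⁻¹ with hg
  have hgc : Continuous g := hpc.inv₀ fun x => (hppos x).ne'
  have hg01 : ∀ x, 0 < g x ∧ g x ≤ 1 := fun x =>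
    ⟨inv_pos.mpr (hppos x), inv_le_one_of_one_le₀ (hp1 x)⟩
  set ψ : ℝ → ℂ := fun x => Complex.exp (Complex.I * lam * f (cl x)) * Complex.ofReal (p x)
    with hψdef
  have hψc : Continuous ψ := by
    apply Continuous.mul
    · exact (Complex.continuous_exp.comp
        (continuous_const.mul (Complex.continuous_ofReal.comp
          ((hf.continuousOn.comp_continuous hclc hclmem)))))
    · exact Complex.continuous_ofReal.comp hpc
  have hψeq : ∀ x ∈ Set.Icc a b, ψ x
      = Complex.exp (Complex.I * lam * f x) * Complex.ofReal (f' x) := by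
    intro x hx; simp only [hψdef, hp, hclid x hx]
  -- monotonicity of g
  have hgmono : Monotone g ∨ Antitone g := by
    rcases hm with h | h
    · exact Or.inr fun x y hxy =>
        inv_anti₀ (hppos x) (h (hclmem x) (hclmem y) (hclm hxy))
    · exact Or.inl fun x y hxy =>
        inv_anti₀ (hppos y) (h (hclmem x) (hclmem y) (hclm hxy))
  have hSord : ∀ t : ℝ, ({x | t < g x} : Set ℝ).OrdConnected := by
    intro t
    constructor
    intro x hx y hy z hz
    rcases hgmono with h | h
    · exact lt_of_lt_of_le hx (h hz.1)
    · exact lt_of_lt_of_le hy (h hz.2)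
  have hSmeas : ∀ t : ℝ, MeasurableSet ({x | t < g x} : Set ℝ) :=
    fun t => measurableSet_lt measurable_const hgc.measurable
  -- bound for ψ
  obtain ⟨C, hC⟩ : ∃ C, ∀ x, ‖ψ x‖ ≤ C := by
    obtain ⟨C, hC⟩ := (isCompact_Icc (a := a) (b := b)).exists_bound_of_continuousOn hf'c
    refine ⟨C, fun x => ?_⟩
    have h1 : ‖ψ x‖ = ‖(p x : ℂ)‖ := by
      rw [hψdef]; simp only [norm_mul, norm_exp_I_lam, one_mul]
    rw [h1, Complex.norm_real]
    exact hC _ (hclmem x)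
  -- measures
  set μ := volume.restrict (Set.Ioc a b) with hμ
  set ν := volume.restrict (Set.Ioc (0:ℝ) 1) with hν
  haveI : IsFiniteMeasure μ := by
    constructor
    rw [hμ, Measure.restrict_apply_univ]
    exact measure_Ioc_lt_top
  haveI : IsFiniteMeasure ν := by
    constructor
    rw [hν, Measure.restrict_apply_univ]
    exact measure_Ioc_lt_top
  set F : ℝ → ℝ → ℂ := fun x t => Set.indicator {x' | t < g x'} ψ x with hF
  have hFeq : ∀ x t, F x t = Set.indicator (Set.Iio (g x)) (fun _ => ψ x) t := by
    intro x t
    simp only [hF, Set.indicator_apply, Set.mem_setOf_eq, Set.mem_Iio]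
  -- integrability on the product
  have hFmeas : StronglyMeasurable (Function.uncurry F) := by
    have hU : IsOpen {q : ℝ × ℝ | q.2 < g q.1} :=
      isOpen_lt continuous_snd (hgc.comp continuous_fst)
    have : Function.uncurry F = Set.indicator {q : ℝ × ℝ | q.2 < g q.1} (fun q => ψ q.1) := by
      funext q
      simp only [Function.uncurry, hF, Set.indicator_apply, Set.mem_setOf_eq]
    rw [this]
    exact (hψc.comp continuous_fst).stronglyMeasurable.indicator hU.measurableSet
  have hFint : Integrable (Function.uncurry F) (μ.prod ν) := by
    apply Integrable.mono' (integrable_const C) hFmeas.aestronglyMeasurable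
    filter_upwards with q
    calc ‖Function.uncurry F q‖ ≤ ‖ψ q.1‖ := by
          rw [Function.uncurry, hFeq]
          exact norm_indicator_le_norm_self _ _
      _ ≤ C := hC _
  -- step 1: from the oscillatory integral to ∫ ψ·g
  have step1 : ∫ x in a..b, Complex.exp (Complex.I * lam * f x)
      = ∫ x, ψ x * Complex.ofReal (g x) ∂μ := by
    rw [intervalIntegral.integral_of_le hab, hμ]
    apply MeasureTheory.setIntegral_congr_fun measurableSet_Ioc
    intro x hx
    have hxab : x ∈ Set.Icc a b := Set.Ioc_subset_Icc_self hx
    dsimp only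
    rw [hψeq x hxab]
    have hne : (f' x : ℂ) ≠ 0 := by
      simp only [ne_eq, Complex.ofReal_eq_zero]
      exact ne_of_gt (lt_of_lt_of_le one_pos (hd x hxab))
    have hgx : g x = (f' x)⁻¹ := by simp [hg, hp, hclid x hxab]
    rw [hgx]
    push_cast
    field_simp
  -- step 2: layer cake per point
  have step2 : ∀ x, ψ x * Complex.ofReal (g x) = ∫ t, F x t ∂ν := by
    intro x
    have heq : ∫ t, F x t ∂ν = ∫ t in Set.Ioc (0:ℝ) 1, Set.indicator (Set.Iio (g x))
        (fun _ => ψ x) t := by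
      rw [hν]
      exact MeasureTheory.integral_congr_ae (MeasureTheory.ae_of_all _ (hFeq x))
    rw [heq, MeasureTheory.setIntegral_indicator measurableSet_Iio,
      MeasureTheory.setIntegral_const]
    have hset : Set.Ioc (0:ℝ) 1 ∩ Set.Iio (g x) = Set.Ioo 0 (g x) := by
      ext t
      simp only [Set.mem_inter_iff, Set.mem_Ioc, Set.mem_Iio, Set.mem_Ioo]
      constructor
      · rintro ⟨⟨h1, h2⟩, h3⟩; exact ⟨h1, h3⟩
      · rintro ⟨h1, h2⟩; exact ⟨⟨h1, le_trans h2.le (hg01 x).2⟩, h2⟩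
    rw [hset, Real.volume_real_Ioo, sub_zero, max_eq_left (hg01 x).1.le]
    rw [real_smul, mul_comm]
  -- swap
  have step3 : ∫ x, ∫ t, F x t ∂ν ∂μ = ∫ t, ∫ x, F x t ∂μ ∂ν :=
    MeasureTheory.integral_integral_swap hFint
  -- bound the inner integrals
  have step4 : ∀ t : ℝ, ‖∫ x, F x t ∂μ‖ ≤ 2 / lam := by
    intro t
    have : ∫ x, F x t ∂μ = ∫ x in Set.Ioc a b ∩ {x' | t < g x'}, ψ x := by
      rw [hμ, MeasureTheory.integral_indicator (hSmeas t),
        Measure.restrict_restrict (hSmeas t), Set.inter_comm]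
    rw [this]
    exact inner_bound hab' hf hlam (fun x hx => hψeq x hx) (hSmeas t) (hSord t)
  calc ‖∫ x in a..b, Complex.exp (Complex.I * lam * f x)‖
      = ‖∫ t, ∫ x, F x t ∂μ ∂ν‖ := by
        rw [step1]
        congr 1
        rw [← step3]
        congr 1
        funext x
        exact step2 x
    _ ≤ (2 / lam) * (volume (Set.Ioc (0:ℝ) 1)).toReal := by
        rw [hν]
        apply MeasureTheory.norm_setIntegral_le_of_norm_le_const_ae' measure_Ioc_lt_top
        filter_upwards with t _
        exact step4 t
    _ = 2 / lam := by simp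

def VDC (k : ℕ) (c : ℝ) : Prop :=
  ∀ f : ℝ → ℝ, ∀ a b : ℝ, a ≤ b →
    ContDiffOn ℝ k f (Set.Icc a b) →
    (∀ x ∈ Set.Icc a b, 1 ≤ iteratedDerivWithin k f (Set.Icc a b) x) →
    (k = 1 → MonotoneOn (derivWithin f (Set.Icc a b)) (Set.Icc a b) ∨
      AntitoneOn (derivWithin f (Set.Icc a b)) (Set.Icc a b)) →
    ∀ lam : ℝ, 0 < lam →
      ‖∫ x in a..b, Complex.exp (Complex.I * lam * f x)‖ ≤ c * lam ^ (-(1 : ℝ) / k)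

lemma vdc_one_s2 : VDC 1 2 := by
  intro f a b hab hf hd hm lam hlam
  have h1 : lam ^ (-(1 : ℝ) / (1 : ℕ)) = lam⁻¹ := by
    norm_num
    exact Real.rpow_neg_one lam
  rw [h1]
  rcases eq_or_lt_of_le hab with rfl | hab'
  · simp; positivity
  have hud : UniqueDiffOn ℝ (Set.Icc a b) := uniqueDiffOn_Icc hab'
  have hd' : ∀ x ∈ Set.Icc a b, 1 ≤ derivWithin f (Set.Icc a b) x := by
    intro x hx
    have := hd x hx
    rwa [iteratedDerivWithin_one] at this
  have := vdc_base hab hf hd' (hm rfl) hlam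
  calc ‖∫ x in a..b, Complex.exp (Complex.I * lam * f x)‖ ≤ 2 / lam := this
    _ = 2 * lam⁻¹ := by ring

lemma intervalIntegral_conj {f : ℝ → ℂ} {a b : ℝ} :
    ∫ x in a..b, (starRingEnd ℂ) (f x) = (starRingEnd ℂ) (∫ x in a..b, f x) := by
  rw [intervalIntegral, intervalIntegral, integral_conj, integral_conj, ← map_sub]

lemma vdc_scaled {k : ℕ} {c : ℝ} (hk : 1 ≤ k) (hc : 0 < c) (h : VDC k c) :
    ∀ f : ℝ → ℝ, ∀ a b : ℝ, a ≤ b → ContDiffOn ℝ k f (Set.Icc a b) →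
    ∀ δ : ℝ, 0 < δ →
    ((∀ x ∈ Set.Icc a b, δ ≤ iteratedDerivWithin k f (Set.Icc a b) x) ∨
      (∀ x ∈ Set.Icc a b, iteratedDerivWithin k f (Set.Icc a b) x ≤ -δ)) →
    (k = 1 → MonotoneOn (derivWithin f (Set.Icc a b)) (Set.Icc a b) ∨
      AntitoneOn (derivWithin f (Set.Icc a b)) (Set.Icc a b)) →
    ∀ lam : ℝ, 0 < lam →
      ‖∫ x in a..b, Complex.exp (Complex.I * lam * f x)‖ ≤ c * (lam * δ) ^ (-(1 : ℝ) / k) := by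
  intro f a b hab hf δ hδ hsign hm lam hlam
  have hlδ : 0 < lam * δ := mul_pos hlam hδ
  rcases eq_or_lt_of_le hab with rfl | hab'
  · simp only [intervalIntegral.integral_same, norm_zero]
    positivity
  have hud : UniqueDiffOn ℝ (Set.Icc a b) := uniqueDiffOn_Icc hab'
  -- the scaled function
  rcases hsign with hpos | hneg
  · set g : ℝ → ℝ := fun y => δ⁻¹ * f y with hgdef
    have hgc : ContDiffOn ℝ k g (Set.Icc a b) := contDiffOn_const.mul hf
    have hgi : ∀ x ∈ Set.Icc a b, 1 ≤ iteratedDerivWithin k g (Set.Icc a b) x := by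
      intro x hx
      rw [hgdef, iteratedDerivWithin_const_mul hx hud _ (hf x hx)]
      have := hpos x hx
      have : 1 ≤ δ⁻¹ * iteratedDerivWithin k f (Set.Icc a b) x := by
        rw [← inv_mul_cancel₀ hδ.ne']
        exact mul_le_mul_of_nonneg_left this (inv_nonneg.mpr hδ.le)
      simpa using this
    have hgm : k = 1 → MonotoneOn (derivWithin g (Set.Icc a b)) (Set.Icc a b) ∨
        AntitoneOn (derivWithin g (Set.Icc a b)) (Set.Icc a b) := by
      intro hk1
      have hEq : Set.EqOn (fun x => δ⁻¹ * derivWithin f (Set.Icc a b) x)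
          (derivWithin g (Set.Icc a b)) (Set.Icc a b) := by
        intro x hx
        have := derivWithin_const_smul (𝕜 := ℝ) δ⁻¹
          ((hf.differentiableOn (by exact_mod_cast (by omega : k ≠ 0))) x hx)
        simpa [hgdef, Pi.smul_def, Pi.neg_def, smul_eq_mul] using this.symm
      rcases hm hk1 with hmono | hanti
      · left
        refine MonotoneOn.congr ?_ hEq
        intro x hx y hy hxy
        exact mul_le_mul_of_nonneg_left (hmono hx hy hxy) (inv_nonneg.mpr hδ.le)
      · right
        refine AntitoneOn.congr ?_ hEq
        intro x hx y hy hxy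
        exact mul_le_mul_of_nonneg_left (hanti hx hy hxy) (inv_nonneg.mpr hδ.le)
    have hδC : (δ:ℂ) ≠ 0 := Complex.ofReal_ne_zero.mpr hδ.ne'
    have hint : ∫ x in a..b, Complex.exp (Complex.I * lam * f x)
        = ∫ x in a..b, Complex.exp (Complex.I * ((lam * δ : ℝ):ℂ) * ((g x : ℝ):ℂ)) := by
      refine intervalIntegral.integral_congr fun x _ => ?_
      show Complex.exp (Complex.I * lam * f x)
        = Complex.exp (Complex.I * ((lam * δ : ℝ):ℂ) * ((δ⁻¹ * f x : ℝ):ℂ))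
      congr 1
      push_cast
      field_simp
    rw [hint]
    exact h g a b hab hgc hgi hgm (lam * δ) hlδ
  · set g : ℝ → ℝ := fun y => (-δ⁻¹) * f y with hgdef
    have hgc : ContDiffOn ℝ k g (Set.Icc a b) := contDiffOn_const.mul hf
    have hgi : ∀ x ∈ Set.Icc a b, 1 ≤ iteratedDerivWithin k g (Set.Icc a b) x := by
      intro x hx
      rw [hgdef, iteratedDerivWithin_const_mul hx hud _ (hf x hx)]
      have h0 := hneg x hx
      have : 1 ≤ -δ⁻¹ * iteratedDerivWithin k f (Set.Icc a b) x := by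
        have h1 : δ⁻¹ * δ ≤ δ⁻¹ * (-(iteratedDerivWithin k f (Set.Icc a b) x)) :=
          mul_le_mul_of_nonneg_left (by linarith) (inv_nonneg.mpr hδ.le)
        rw [inv_mul_cancel₀ hδ.ne'] at h1
        linarith [h1]
      simpa using this
    have hgm : k = 1 → MonotoneOn (derivWithin g (Set.Icc a b)) (Set.Icc a b) ∨
        AntitoneOn (derivWithin g (Set.Icc a b)) (Set.Icc a b) := by
      intro hk1
      have hEq : Set.EqOn (fun x => (-δ⁻¹) * derivWithin f (Set.Icc a b) x)
          (derivWithin g (Set.Icc a b)) (Set.Icc a b) := by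
        intro x hx
        have := derivWithin_const_smul (𝕜 := ℝ) (-δ⁻¹)
          ((hf.differentiableOn (by exact_mod_cast (by omega : k ≠ 0))) x hx)
        simpa [hgdef, Pi.smul_def, Pi.neg_def, smul_eq_mul] using this.symm
      rcases hm hk1 with hmono | hanti
      · right
        refine AntitoneOn.congr ?_ hEq
        intro x hx y hy hxy
        have := hmono hx hy hxy
        nlinarith [inv_pos.mpr hδ]
      · left
        refine MonotoneOn.congr ?_ hEq
        intro x hx y hy hxy
        have := hanti hx hy hxy
        nlinarith [inv_pos.mpr hδ]
    have hδC : (δ:ℂ) ≠ 0 := Complex.ofReal_ne_zero.mpr hδ.ne'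
    have hint : ∫ x in a..b, Complex.exp (Complex.I * ((lam * δ : ℝ):ℂ) * ((g x : ℝ):ℂ))
        = (starRingEnd ℂ) (∫ x in a..b, Complex.exp (Complex.I * lam * f x)) := by
      rw [← _root_.intervalIntegral_conj]
      refine intervalIntegral.integral_congr fun x _ => ?_
      show Complex.exp (Complex.I * ((lam * δ : ℝ):ℂ) * ((-δ⁻¹ * f x : ℝ):ℂ))
        = (starRingEnd ℂ) (Complex.exp (Complex.I * lam * f x))
      rw [← Complex.exp_conj]
      congr 1
      simp only [map_mul, Complex.conj_I, Complex.conj_ofReal]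
      push_cast
      field_simp
    have := h g a b hab hgc hgi hgm (lam * δ) hlδ
    rw [hint] at this
    rwa [RCLike.norm_conj] at this

lemma vdc_succ {k : ℕ} {c : ℝ} (hk : 1 ≤ k) (hc : 0 < c) (h : VDC k c) :
    VDC (k + 1) (2 * c + 2) := by
  intro f a b hab hf hd _ lam hlam
  classical
  have hkR : (0:ℝ) < k := by exact_mod_cast hk
  have hk1R : (0:ℝ) < (k:ℝ) + 1 := by positivity
  set δ : ℝ := lam ^ (-(1:ℝ) / (k + 1)) with hδdef
  have hδ : 0 < δ := Real.rpow_pos_of_pos hlam _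
  -- the key rpow identity : c * (lam * δ) ^ (-(1:ℝ)/k) = c * δ
  have hrpow : (lam * δ) ^ (-(1 : ℝ) / k) = δ := by
    rw [hδdef]
    rw [show lam * lam ^ (-(1:ℝ) / (k + 1))
        = lam ^ ((1:ℝ) + -(1:ℝ) / (k+1)) by rw [Real.rpow_add hlam, Real.rpow_one]]
    rw [← Real.rpow_mul hlam.le]
    congr 1
    field_simp
    ring
  have hrexp : lam ^ (-(1 : ℝ) / ((k:ℝ) + 1)) = δ := hδdef.symm
  rcases eq_or_lt_of_le hab with rfl | hab'
  · simp only [intervalIntegral.integral_same, norm_zero]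
    have : (0:ℝ) < (2*c+2) * lam ^ (-(1 : ℝ) / (k+1:ℕ)) := by positivity
    linarith
  have hud : UniqueDiffOn ℝ (Set.Icc a b) := uniqueDiffOn_Icc hab'
  set g := iteratedDerivWithin k f (Set.Icc a b) with hgdef
  have hfk : ContDiffOn ℝ k f (Set.Icc a b) := hf.of_le (by exact_mod_cast Nat.le_succ k)
  have hgc : ContinuousOn g (Set.Icc a b) :=
    hf.continuousOn_iteratedDerivWithin (by exact_mod_cast Nat.le_succ k) hud
  have hgd : DifferentiableOn ℝ g (Set.Icc a b) :=
    hf.differentiableOn_iteratedDerivWithin (by exact_mod_cast Nat.lt_succ_self k) hud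
  have hg' : ∀ x ∈ Set.Icc a b, 1 ≤ derivWithin g (Set.Icc a b) x := by
    intro x hx
    rw [hgdef, ← iteratedDerivWithin_succ]
    exact hd x hx
  -- deriv bounds at interior points
  have hgderiv : ∀ x ∈ Set.Ioo a b, HasDerivAt g (derivWithin g (Set.Icc a b) x) x := by
    intro x hx
    exact ((hgd x (Set.mem_Icc_of_Ioo hx)).hasDerivWithinAt).hasDerivAt
      (Icc_mem_nhds hx.1 hx.2)
  have hmono_aux : MonotoneOn (fun z => g z - z) (Set.Icc a b) := by
    apply monotoneOn_of_deriv_nonneg (f := fun z => g z - z) (convex_Icc a b) (hgc.sub continuousOn_id)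
    · intro x hx
      rw [interior_Icc] at hx
      exact ((hgderiv x hx).sub (hasDerivAt_id' (x := x))).differentiableAt.differentiableWithinAt
    · intro x hx
      rw [interior_Icc] at hx
      have h1 : deriv (fun z => g z - z) x = derivWithin g (Set.Icc a b) x - 1 := by
        exact ((hgderiv x hx).sub (hasDerivAt_id' (x := x))).deriv
      rw [h1]
      have := hg' x (Set.mem_Icc_of_Ioo hx)
      linarith
  have hkey : ∀ x ∈ Set.Icc a b, ∀ y ∈ Set.Icc a b, x ≤ y → y - x ≤ g y - g x := by
    intro x hx y hy hxy
    have := hmono_aux hx hy hxy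
    simp only at this
    linarith
  have hgmono : MonotoneOn g (Set.Icc a b) := by
    intro x hx y hy hxy
    have := hkey x hx y hy hxy
    linarith
  -- the splitting points
  set A := {x ∈ Set.Icc a b | g x ≤ -δ} with hA
  set B := {x ∈ Set.Icc a b | δ ≤ g x} with hB
  have hAclosed : IsClosed A := by
    have : A = Set.Icc a b ∩ g ⁻¹' (Set.Iic (-δ)) := by
      ext x; simp [hA, Set.mem_sep_iff]
    rw [this]
    exact hgc.preimage_isClosed_of_isClosed isClosed_Icc isClosed_Iic
  have hBclosed : IsClosed B := by
    have : B = Set.Icc a b ∩ g ⁻¹' (Set.Ici δ) := by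
      ext x; simp [hB, Set.mem_sep_iff]
    rw [this]
    exact hgc.preimage_isClosed_of_isClosed isClosed_Icc isClosed_Ici
  have hAsub : A ⊆ Set.Icc a b := fun x hx => hx.1
  have hBsub : B ⊆ Set.Icc a b := fun x hx => hx.1
  have hAbdd : BddAbove A := (isCompact_Icc (a := a) (b := b)).bddAbove.mono hAsub
  have hBbddb : BddBelow B := (isCompact_Icc (a := a) (b := b)).bddBelow.mono hBsub
  set u := if hAne : A.Nonempty then sSup A else a with hudef
  set v := if hBne : B.Nonempty then sInf B else b with hvdef
  have huA : A.Nonempty → u ∈ A := by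
    intro hne
    rw [hudef, dif_pos hne]
    exact hAclosed.csSup_mem hne hAbdd
  have hvB : B.Nonempty → v ∈ B := by
    intro hne
    rw [hvdef, dif_pos hne]
    exact hBclosed.csInf_mem hne hBbddb
  have humem : u ∈ Set.Icc a b := by
    by_cases hne : A.Nonempty
    · exact hAsub (huA hne)
    · rw [hudef, dif_neg hne]; exact Set.left_mem_Icc.mpr hab
  have hvmem : v ∈ Set.Icc a b := by
    by_cases hne : B.Nonempty
    · exact hBsub (hvB hne)
    · rw [hvdef, dif_neg hne]; exact Set.right_mem_Icc.mpr hab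
  have huv : u ≤ v := by
    by_cases hAne : A.Nonempty
    · by_cases hBne : B.Nonempty
      · by_contra hlt
        push_neg at hlt
        have h1 := (huA hAne).2
        have h2 := (hvB hBne).2
        have := hgmono (hvB hBne).1 (huA hAne).1 hlt.le
        linarith
      · rw [hvdef, dif_neg hBne]; exact humem.2
    · rw [hudef, dif_neg hAne]; exact hvmem.1
  -- upper bounds for points strictly between u and v
  have hmid : ∀ x ∈ Set.Ioo u v, -δ < g x ∧ g x < δ := by
    intro x hx
    have hxmem : x ∈ Set.Icc a b := ⟨le_trans humem.1 hx.1.le, le_trans hx.2.le hvmem.2⟩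
    constructor
    · by_contra hle
      push_neg at hle
      have hxA : x ∈ A := ⟨hxmem, hle⟩
      have : x ≤ u := by
        rw [hudef, dif_pos ⟨x, hxA⟩]
        exact le_csSup hAbdd hxA
      linarith [hx.1]
    · by_contra hle
      push_neg at hle
      have hxB : x ∈ B := ⟨hxmem, hle⟩
      have : v ≤ x := by
        rw [hvdef, dif_pos ⟨x, hxB⟩]
        exact csInf_le hBbddb hxB
      linarith [hx.2]
  have hvu : v - u ≤ 2 * δ := by
    by_contra hgt
    push_neg at hgt
    set ε := (v - u - 2*δ) / 4 with hε
    have hεpos : 0 < ε := by rw [hε]; linarith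
    have hx1 : u + ε ∈ Set.Ioo u v := by
      constructor
      · linarith
      · rw [hε]; linarith
    have hy1 : v - ε ∈ Set.Ioo u v := by
      constructor
      · rw [hε]; linarith
      · linarith
    have hxy : u + ε ≤ v - ε := by rw [hε]; linarith
    have hxmem : u + ε ∈ Set.Icc a b :=
      ⟨le_trans humem.1 hx1.1.le, le_trans hx1.2.le hvmem.2⟩
    have hymem : v - ε ∈ Set.Icc a b :=
      ⟨le_trans humem.1 hy1.1.le, le_trans hy1.2.le hvmem.2⟩
    have h1 := hkey _ hxmem _ hymem hxy
    have h2 := (hmid _ hx1).1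
    have h3 := (hmid _ hy1).2
    rw [hε] at h1
    linarith
  -- integrability for splitting
  have hintab : ∀ u' v' : ℝ, u' ∈ Set.Icc a b → v' ∈ Set.Icc a b →
      IntervalIntegrable (fun x => Complex.exp (Complex.I * lam * f x)) volume u' v' := by
    intro u' v' hu' hv'
    apply ContinuousOn.intervalIntegrable
    have hsub : Set.uIcc u' v' ⊆ Set.Icc a b := Set.uIcc_subset_Icc hu' hv'
    have : ContinuousOn (fun x : ℝ => Complex.I * lam * f x) (Set.uIcc u' v') :=
      continuousOn_const.mul (Complex.continuous_ofReal.comp_continuousOn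
        (hf.continuousOn.mono hsub))
    exact this.cexp
  have hsplit : ∫ x in a..b, Complex.exp (Complex.I * lam * f x)
      = (∫ x in a..u, Complex.exp (Complex.I * lam * f x))
        + (∫ x in u..v, Complex.exp (Complex.I * lam * f x))
        + (∫ x in v..b, Complex.exp (Complex.I * lam * f x)) := by
    rw [intervalIntegral.integral_add_adjacent_intervals (hintab a u (Set.left_mem_Icc.mpr hab)
      humem) (hintab u v humem hvmem),
      intervalIntegral.integral_add_adjacent_intervals (hintab a v (Set.left_mem_Icc.mpr hab)
      hvmem) (hintab v b hvmem (Set.right_mem_Icc.mpr hab))]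
  -- middle piece
  have hmidbound : ‖∫ x in u..v, Complex.exp (Complex.I * lam * f x)‖ ≤ 2 * δ := by
    calc ‖∫ x in u..v, Complex.exp (Complex.I * lam * f x)‖ ≤ 1 * |v - u| := by
          apply intervalIntegral.norm_integral_le_of_norm_le_const
          intro x _
          rw [norm_exp_I_lam]
      _ ≤ 2 * δ := by rw [_root_.abs_of_nonneg (by linarith : (0:ℝ) ≤ v - u)]; linarith
  -- left piece
  have hleft : ‖∫ x in a..u, Complex.exp (Complex.I * lam * f x)‖ ≤ c * δ := by
    rcases eq_or_lt_of_le humem.1 with heq | hau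
    · rw [← heq]
      simp only [intervalIntegral.integral_same, norm_zero]
      positivity
    have hAne : A.Nonempty := by
      by_contra hne
      rw [hudef, dif_neg hne] at hau
      exact lt_irrefl a hau
    have hsub : Set.Icc a u ⊆ Set.Icc a b := Set.Icc_subset_Icc le_rfl humem.2
    have hudu : UniqueDiffOn ℝ (Set.Icc a u) := uniqueDiffOn_Icc hau
    have htrans := iterDW_subset hsub hudu hud hfk
    have hneg : ∀ x ∈ Set.Icc a u, iteratedDerivWithin k f (Set.Icc a u) x ≤ -δ := by
      intro x hx
      rw [htrans k le_rfl x hx]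
      have hxab : x ∈ Set.Icc a b := hsub hx
      calc iteratedDerivWithin k f (Set.Icc a b) x = g x := rfl
        _ ≤ g u := hgmono hxab humem hx.2
        _ ≤ -δ := (huA hAne).2
    have hmono1 : k = 1 → MonotoneOn (derivWithin f (Set.Icc a u)) (Set.Icc a u) ∨
        AntitoneOn (derivWithin f (Set.Icc a u)) (Set.Icc a u) := by
      intro hk1
      left
      subst hk1
      have hEq : ∀ x ∈ Set.Icc a u, derivWithin f (Set.Icc a u) x = g x := by
        intro x hx
        rw [← iteratedDerivWithin_one]
        exact htrans 1 le_rfl x hx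
      intro x hx y hy hxy
      rw [hEq x hx, hEq y hy]
      exact hgmono (hsub hx) (hsub hy) hxy
    have := vdc_scaled hk hc h f a u humem.1 (hfk.mono hsub) δ hδ (Or.inr hneg) hmono1 lam hlam
    rw [hrpow] at this
    exact this
  -- right piece
  have hright : ‖∫ x in v..b, Complex.exp (Complex.I * lam * f x)‖ ≤ c * δ := by
    rcases eq_or_lt_of_le hvmem.2 with heq | hvb
    · rw [heq]
      simp only [intervalIntegral.integral_same, norm_zero]
      positivity
    have hBne : B.Nonempty := by
      by_contra hne
      rw [hvdef, dif_neg hne] at hvb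
      exact lt_irrefl b hvb
    have hsub : Set.Icc v b ⊆ Set.Icc a b := Set.Icc_subset_Icc hvmem.1 le_rfl
    have hudv : UniqueDiffOn ℝ (Set.Icc v b) := uniqueDiffOn_Icc hvb
    have htrans := iterDW_subset hsub hudv hud hfk
    have hpos : ∀ x ∈ Set.Icc v b, δ ≤ iteratedDerivWithin k f (Set.Icc v b) x := by
      intro x hx
      rw [htrans k le_rfl x hx]
      have hxab : x ∈ Set.Icc a b := hsub hx
      calc δ ≤ g v := (hvB hBne).2
        _ ≤ g x := hgmono hvmem hxab hx.1
    have hmono1 : k = 1 → MonotoneOn (derivWithin f (Set.Icc v b)) (Set.Icc v b) ∨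
        AntitoneOn (derivWithin f (Set.Icc v b)) (Set.Icc v b) := by
      intro hk1
      left
      subst hk1
      have hEq : ∀ x ∈ Set.Icc v b, derivWithin f (Set.Icc v b) x = g x := by
        intro x hx
        rw [← iteratedDerivWithin_one]
        exact htrans 1 le_rfl x hx
      intro x hx y hy hxy
      rw [hEq x hx, hEq y hy]
      exact hgmono (hsub hx) (hsub hy) hxy
    have := vdc_scaled hk hc h f v b hvmem.2 (hfk.mono hsub) δ hδ (Or.inl hpos) hmono1 lam hlam
    rw [hrpow] at this
    exact this
  -- combine
  have hfinal : lam ^ (-(1 : ℝ) / ((k + 1 : ℕ) : ℝ)) = δ := by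
    rw [← hrexp]
    norm_num
  calc ‖∫ x in a..b, Complex.exp (Complex.I * lam * f x)‖
      ≤ ‖∫ x in a..u, Complex.exp (Complex.I * lam * f x)‖
        + ‖∫ x in u..v, Complex.exp (Complex.I * lam * f x)‖
        + ‖∫ x in v..b, Complex.exp (Complex.I * lam * f x)‖ := by
        rw [hsplit]
        exact le_trans (norm_add_le _ _) (by gcongr; exact norm_add_le _ _)
    _ ≤ c * δ + 2 * δ + c * δ := by gcongr
    _ = (2 * c + 2) * δ := by ring
    _ = (2 * c + 2) * lam ^ (-(1 : ℝ) / ((k + 1 : ℕ) : ℝ)) := by rw [hfinal]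

lemma vdc_exists (k : ℕ) (hk : 1 ≤ k) : ∃ c : ℝ, 0 < c ∧ VDC k c := by
  induction k, hk using Nat.le_induction with
  | base => exact ⟨2, by norm_num, vdc_one_s2⟩
  | succ n hn ih =>
    obtain ⟨c, hc, hv⟩ := ih
    exact ⟨2 * c + 2, by linarith, vdc_succ hn hc hv⟩

/-- Van der Corput lemma with amplitude: under the van der Corput hypotheses on the
phase (k-th derivative ≥ 1 on [a,b], with f' monotone in the case k = 1), for a C¹
amplitude φ one has
`|∫_a^b e^{iλ f} φ| ≤ c_k λ^{-1/k} (|φ(b)| + ∫_a^b |φ'|)`, with c_k depending only on k. -/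
theorem vanDerCorput_with_amplitude (k : ℕ) (hk : 1 ≤ k) :
    ∃ c : ℝ, 0 < c ∧ ∀ (f : ℝ → ℝ) (φ : ℝ → ℂ) (a b : ℝ), a ≤ b →
      ContDiffOn ℝ k f (Set.Icc a b) →
      (∀ x ∈ Set.Icc a b, 1 ≤ iteratedDerivWithin k f (Set.Icc a b) x) →
      (k = 1 → MonotoneOn (derivWithin f (Set.Icc a b)) (Set.Icc a b) ∨
        AntitoneOn (derivWithin f (Set.Icc a b)) (Set.Icc a b)) →
      ContDiffOn ℝ 1 φ (Set.Icc a b) →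
      ∀ lam : ℝ, 0 < lam →
        ‖∫ x in a..b, Complex.exp (Complex.I * lam * f x) * φ x‖ ≤
          c * lam ^ (-(1 : ℝ) / k) *
            (‖φ b‖ + ∫ x in a..b, ‖derivWithin φ (Set.Icc a b) x‖) := by
  obtain ⟨c, hc, hvdc⟩ := vdc_exists k hk
  refine ⟨c, hc, ?_⟩
  intro f φ a b hab hf hd hm hφ lam hlam
  have hMpos : 0 < c * lam ^ (-(1 : ℝ) / k) := by positivity
  set M := c * lam ^ (-(1 : ℝ) / k) with hMdef
  rcases eq_or_lt_of_le hab with rfl | hab'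
  · simp only [intervalIntegral.integral_same, norm_zero]
    have h0 : (0:ℝ) ≤ ‖φ a‖ := norm_nonneg _
    nlinarith
  have hud : UniqueDiffOn ℝ (Set.Icc a b) := uniqueDiffOn_Icc hab'
  have hfc : ContinuousOn f (Set.Icc a b) := hf.continuousOn
  set e : ℝ → ℂ := fun x => Complex.exp (Complex.I * lam * f x) with hedef
  have hecont : ContinuousOn e (Set.Icc a b) :=
    (continuousOn_const.mul (Complex.continuous_ofReal.comp_continuousOn hfc)).cexp
  have heint : ∀ x ∈ Set.Icc a b, IntervalIntegrable e volume a x := by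
    intro x hx
    apply ContinuousOn.intervalIntegrable
    exact hecont.mono (Set.uIcc_subset_Icc (Set.left_mem_Icc.mpr hab) hx)
  set F : ℝ → ℂ := fun x => ∫ t in a..x, e t with hFdef
  -- bound on F
  have hFbound : ∀ x ∈ Set.Icc a b, ‖F x‖ ≤ M := by
    intro x hx
    rcases eq_or_lt_of_le hx.1 with rfl | hax
    · simp only [hFdef, intervalIntegral.integral_same, norm_zero]
      exact hMpos.le
    have hsub : Set.Icc a x ⊆ Set.Icc a b := Set.Icc_subset_Icc le_rfl hx.2
    have hudx : UniqueDiffOn ℝ (Set.Icc a x) := uniqueDiffOn_Icc hax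
    have htrans := iterDW_subset hsub hudx hud hf
    have hd' : ∀ y ∈ Set.Icc a x, 1 ≤ iteratedDerivWithin k f (Set.Icc a x) y := by
      intro y hy
      rw [htrans k le_rfl y hy]
      exact hd y (hsub hy)
    have hm' : k = 1 → MonotoneOn (derivWithin f (Set.Icc a x)) (Set.Icc a x) ∨
        AntitoneOn (derivWithin f (Set.Icc a x)) (Set.Icc a x) := by
      intro hk1
      subst hk1
      have hEq : ∀ y ∈ Set.Icc a x, derivWithin f (Set.Icc a x) y
          = derivWithin f (Set.Icc a b) y := by
        intro y hy
        rw [← iteratedDerivWithin_one,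
          ← iteratedDerivWithin_one]
        exact htrans 1 le_rfl y hy
      rcases hm rfl with hmono | hanti
      · exact Or.inl (((hmono.mono hsub)).congr fun y hy => (hEq y hy).symm)
      · exact Or.inr (((hanti.mono hsub)).congr fun y hy => (hEq y hy).symm)
    exact hvdc f a x hx.1 (hf.mono hsub) hd' hm' lam hlam
  -- continuity of F
  have hFcont : ContinuousOn F (Set.Icc a b) := by
    have : Set.uIcc a b = Set.Icc a b := Set.uIcc_of_le hab
    rw [hFdef, ← this]
    apply intervalIntegral.continuousOn_primitive_interval
    rw [this]
    exact hecont.integrableOn_compact isCompact_Icc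
  -- derivatives
  have hFderiv : ∀ x ∈ Set.Ioo a b, HasDerivAt F (e x) x := by
    intro x hx
    apply intervalIntegral.integral_hasDerivAt_right (heint x (Set.mem_Icc_of_Ioo hx))
    · exact ⟨Set.Icc a b, Icc_mem_nhds hx.1 hx.2,
        hecont.aestronglyMeasurable measurableSet_Icc⟩
    · exact (hecont x (Set.mem_Icc_of_Ioo hx)).continuousAt (Icc_mem_nhds hx.1 hx.2)
  set φ' : ℝ → ℂ := derivWithin φ (Set.Icc a b) with hφ'def
  have hφ'c : ContinuousOn φ' (Set.Icc a b) := hφ.continuousOn_derivWithin hud le_rfl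
  have hφderiv : ∀ x ∈ Set.Ioo a b, HasDerivAt φ (φ' x) x := by
    intro x hx
    exact (((hφ.differentiableOn one_ne_zero) x (Set.mem_Icc_of_Ioo hx)).hasDerivWithinAt).hasDerivAt
      (Icc_mem_nhds hx.1 hx.2)
  -- integration by parts via FTC-2
  have hHcont : ContinuousOn (fun x => F x * φ x) (Set.Icc a b) := hFcont.mul hφ.continuousOn
  have hintegrand_cont : ContinuousOn (fun x => e x * φ x + F x * φ' x) (Set.Icc a b) :=
    (hecont.mul hφ.continuousOn).add (hFcont.mul hφ'c)
  have hibp : ∫ x in a..b, (e x * φ x + F x * φ' x) = F b * φ b - F a * φ a := by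
    apply intervalIntegral.integral_eq_sub_of_hasDeriv_right_of_le hab hHcont
    · intro x hx
      exact (((hFderiv x hx).mul (hφderiv x hx)).congr_deriv (by ring)).hasDerivWithinAt
    · apply ContinuousOn.intervalIntegrable
      rwa [Set.uIcc_of_le hab]
  have hFa : F a = 0 := by simp [hFdef]
  have heφint : IntervalIntegrable (fun x => e x * φ x) volume a b := by
    apply ContinuousOn.intervalIntegrable
    rw [Set.uIcc_of_le hab]
    exact hecont.mul hφ.continuousOn
  have hFφ'int : IntervalIntegrable (fun x => F x * φ' x) volume a b := by
    apply ContinuousOn.intervalIntegrable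
    rw [Set.uIcc_of_le hab]
    exact hFcont.mul hφ'c
  have hsplit : ∫ x in a..b, e x * φ x
      = F b * φ b - ∫ x in a..b, F x * φ' x := by
    have h2 : (∫ x in a..b, e x * φ x) + ∫ x in a..b, F x * φ' x = F b * φ b := by
      rw [← intervalIntegral.integral_add heφint hFφ'int, hibp, hFa, zero_mul, sub_zero]
    linear_combination h2
  have hnormint : IntervalIntegrable (fun x => ‖F x * φ' x‖) volume a b := by
    apply ContinuousOn.intervalIntegrable
    rw [Set.uIcc_of_le hab]
    exact (hFcont.mul hφ'c).norm
  have hnormint2 : IntervalIntegrable (fun x => M * ‖φ' x‖) volume a b := by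
    apply ContinuousOn.intervalIntegrable
    rw [Set.uIcc_of_le hab]
    exact continuousOn_const.mul hφ'c.norm
  calc ‖∫ x in a..b, e x * φ x‖
      = ‖F b * φ b - ∫ x in a..b, F x * φ' x‖ := by rw [hsplit]
    _ ≤ ‖F b * φ b‖ + ‖∫ x in a..b, F x * φ' x‖ := norm_sub_le _ _
    _ ≤ M * ‖φ b‖ + ∫ x in a..b, ‖F x * φ' x‖ := by
        apply add_le_add
        · rw [norm_mul]
          exact mul_le_mul_of_nonneg_right (hFbound b (Set.right_mem_Icc.mpr hab))
            (norm_nonneg _)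
        · exact intervalIntegral.norm_integral_le_integral_norm hab
    _ ≤ M * ‖φ b‖ + ∫ x in a..b, M * ‖φ' x‖ := by
        apply add_le_add_right
        apply intervalIntegral.integral_mono_on hab hnormint hnormint2
        intro x hx
        rw [norm_mul]
        exact mul_le_mul_of_nonneg_right (hFbound x hx) (norm_nonneg _)
    _ = M * (‖φ b‖ + ∫ x in a..b, ‖φ' x‖) := by
        rw [intervalIntegral.integral_const_mul]
        ring
end

section
/- For λ ≥ 2 and a positive integer d, the Lebesgue measure of the set {(x₁,...,x_n) ∈ [0,1]^n : x₁^{α₁} ⋯ x_n^{α_n} < 1/λ}, where α ∈ ℤ₊^n, d = max_j α_j, and M = #{j : α_j = d}, is at most C(α) λ^{-1/d} (log λ)^{M-1} for a constant C(α) depending only on α. -/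
open Real MeasureTheory Finset

lemma lint_rpow_Ioc (β : ℝ) (h0 : 0 ≤ β) (h1 : β < 1) :
    ∫⁻ u in Set.Ioc (0:ℝ) 1, ENNReal.ofReal (u ^ (-β)) = ENNReal.ofReal (1/(1-β)) := by
  rw [← ofReal_integral_eq_lintegral_ofReal]
  · congr 1
    have h2 : ∫ u in Set.Ioc (0:ℝ) 1, u ^ (-β) = ∫ u in (0:ℝ)..1, u ^ (-β) :=
      (intervalIntegral.integral_of_le zero_le_one).symm
    rw [h2, integral_rpow (Or.inl (by linarith))]
    rw [Real.one_rpow, Real.zero_rpow (by intro h; linarith : -β + 1 ≠ 0)]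
    ring_nf
  · exact (intervalIntegrable_iff_integrableOn_Ioc_of_le zero_le_one).1
      (intervalIntegral.intervalIntegrable_rpow' (by linarith))
  · filter_upwards [ae_restrict_mem measurableSet_Ioc] with u hu
    exact Real.rpow_nonneg hu.1.le _

lemma lint_inv_Icc (c : ℝ) (h0 : 0 < c) (h1 : c ≤ 1) :
    ∫⁻ u in Set.Icc c 1, ENNReal.ofReal (u ^ (-1:ℝ)) = ENNReal.ofReal (Real.log (1/c)) := by
  have hnot : (0:ℝ) ∉ Set.uIcc c 1 := by
    rw [Set.uIcc_of_le h1]; intro h; exact absurd h.1 (by linarith)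
  rw [← setLIntegral_congr (MeasureTheory.Ioc_ae_eq_Icc (a := c) (b := 1))]
  rw [← ofReal_integral_eq_lintegral_ofReal]
  · congr 1
    have h2 : ∫ u in Set.Ioc c 1, u ^ (-1:ℝ) = ∫ u in c..1, u ^ (-1:ℝ) :=
      (intervalIntegral.integral_of_le h1).symm
    have h3 : ∀ u ∈ Set.uIcc c 1, u ^ (-1:ℝ) = u⁻¹ := fun u _ => Real.rpow_neg_one u
    rw [h2, intervalIntegral.integral_congr h3, integral_inv hnot]
  · exact (intervalIntegrable_iff_integrableOn_Ioc_of_le h1).1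
      (intervalIntegral.intervalIntegrable_rpow (Or.inr hnot))
  · filter_upwards [ae_restrict_mem measurableSet_Ioc] with u hu
    exact Real.rpow_nonneg (h0.trans_le hu.1.le).le _

lemma lintegral_pi_prod {m : ℕ} (f : Fin m → ℝ → ENNReal) (hf : ∀ i, Measurable (f i)) :
    ∫⁻ x : Fin m → ℝ, ∏ i, f i (x i) = ∏ i, ∫⁻ t, f i t := by
  induction m with
  | zero =>
    simp only [Finset.univ_eq_empty, Finset.prod_empty]
    rw [lintegral_const, mul_comm]
    simp [MeasureTheory.volume_pi, Measure.pi_univ]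
  | succ m ih =>
    have hmp := (volume_preserving_piFinSuccAbove (fun _ : Fin (m+1) => ℝ) 0).symm
      (MeasurableEquiv.piFinSuccAbove (fun _ : Fin (m+1) => ℝ) 0)
    have hFm : Measurable fun x : Fin (m+1) → ℝ => ∏ i, f i (x i) :=
      Finset.measurable_prod _ fun i _ => (hf i).comp (measurable_pi_apply i)
    rw [← hmp.lintegral_comp hFm]
    have key : ∀ y : ℝ × (Fin m → ℝ),
        (∏ i, f i (((MeasurableEquiv.piFinSuccAbove (fun _ : Fin (m+1) => ℝ) 0).symm y) i))
        = f 0 y.1 * ∏ k, f k.succ (y.2 k) := by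
      intro y
      rw [MeasurableEquiv.piFinSuccAbove_symm_apply]
      rw [Fin.prod_univ_succAbove _ 0]
      simp [Fin.insertNthEquiv]
    simp only [key]
    rw [Measure.volume_eq_prod _ _]
    have hsplit := lintegral_prod_mul (μ := (volume : Measure ℝ))
      (ν := (volume : Measure (Fin m → ℝ)))
      (f := fun t => f 0 t) (g := fun y => ∏ k, f k.succ (y k)) (hf 0).aemeasurable
      (Finset.measurable_prod _ fun k _ => (hf k.succ).comp (measurable_pi_apply k)).aemeasurable
    rw [hsplit, ih (fun k => f k.succ) (fun k => hf k.succ), Fin.prod_univ_succ]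

set_option maxHeartbeats 1000000 in
/-- Sublevel set estimate for a monomial on the unit cube: the measure of
`{x ∈ [0,1]^n : ∏ x_j^{α_j} < 1/λ}` is at most `C(α) λ^{-1/d} (log λ)^{M-1}`
where `d = max_j α_j` and `M = #{j : α_j = d}`. -/
theorem monomial_sublevel_measure (n : ℕ) (α : Fin n → ℕ) (hα : ∀ j, 1 ≤ α j)
    (d : ℕ) (hd : d = Finset.univ.sup α) (hdpos : 0 < d)
    (M : ℕ) (hM : M = (Finset.univ.filter fun j => α j = d).card) :
    ∃ C : ℝ, 0 < C ∧ ∀ lam : ℝ, 2 ≤ lam →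
      (volume {x : Fin n → ℝ | (∀ j, x j ∈ Set.Icc (0:ℝ) 1) ∧
          ∏ j, x j ^ α j < 1 / lam}) ≤
        ENNReal.ofReal (C * lam ^ (-(1:ℝ)/d) * Real.log lam ^ (M - 1)) := by
  rcases Nat.eq_zero_or_pos n with hn | hn
  · subst hn
    refine ⟨1, one_pos, fun lam hlam => ?_⟩
    have hempty : {x : Fin 0 → ℝ | (∀ j, x j ∈ Set.Icc (0:ℝ) 1) ∧
        ∏ j, x j ^ α j < 1 / lam} = ∅ := by
      ext x
      simp only [Set.mem_setOf_eq, Set.mem_empty_iff_false, iff_false, not_and]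
      intro _
      rw [Finset.univ_eq_empty, Finset.prod_empty]
      intro h
      have : (1:ℝ)/lam ≤ 1 := by
        rw [div_le_one (by linarith)]; linarith
      linarith
    rw [hempty]
    simp
  obtain ⟨m, rfl⟩ : ∃ m, n = m + 1 := ⟨n - 1, (Nat.succ_pred_eq_of_pos hn).symm⟩
  obtain ⟨j0, -, hj0⟩ := Finset.exists_mem_eq_sup (univ : Finset (Fin (m+1)))
    univ_nonempty α
  have hαj0 : α j0 = d := by rw [hd, hj0]
  have hα'le : ∀ k : Fin m, α (j0.succAbove k) ≤ d := fun k => by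
    rw [hd]; exact Finset.le_sup (mem_univ _)
  -- counting
  have hMcard : (univ.filter fun k : Fin m => α (j0.succAbove k) = d).card = M - 1 ∧ 1 ≤ M := by
    have himg : (univ.filter fun j => α j = d)
        = insert j0 ((univ.filter fun k : Fin m => α (j0.succAbove k) = d).image j0.succAbove) := by
      ext j
      simp only [mem_insert, mem_image, mem_filter, mem_univ, true_and]
      constructor
      · intro hj
        rcases eq_or_ne j j0 with rfl | hne
        · exact Or.inl rfl
        · obtain ⟨k, hk⟩ := Fin.exists_succAbove_eq hne
          exact Or.inr ⟨k, by rw [hk]; exact hj, hk⟩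
      · rintro (rfl | ⟨k, hk, rfl⟩)
        · exact hαj0
        · exact hk
    have hnotmem : j0 ∉ (univ.filter fun k : Fin m => α (j0.succAbove k) = d).image j0.succAbove := by
      simp only [mem_image, mem_filter, mem_univ, true_and]
      rintro ⟨k, -, hk⟩
      exact Fin.succAbove_ne j0 k hk
    have hMeq : M = (univ.filter fun k : Fin m => α (j0.succAbove k) = d).card + 1 := by
      rw [hM, himg, Finset.card_insert_of_notMem hnotmem,
        Finset.card_image_of_injective _ (Fin.succAbove_right_injective)]
    constructor
    · omega
    · omega
  obtain ⟨hMcard, hM1⟩ := hMcard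
  refine ⟨4 * (d:ℝ)^m + Real.exp 2 * 2^M, by positivity, fun lam hlam => ?_⟩
  set C : ℝ := 4 * (d:ℝ)^m + Real.exp 2 * 2^M with hC
  have hlam0 : (0:ℝ) < lam := by linarith
  have hlam1 : (1:ℝ) ≤ lam := by linarith
  set L : ℝ := Real.log lam with hLdef
  have hL0 : 0 < L := Real.log_pos (by linarith)
  have hd1 : (1:ℝ) ≤ (d:ℝ) := by exact_mod_cast hdpos
  set E : Set (Fin (m+1) → ℝ) := {x | (∀ j, x j ∈ Set.Icc (0:ℝ) 1) ∧
      ∏ j, x j ^ α j < 1 / lam} with hEdef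
  have hEmeas : MeasurableSet E := by
    apply MeasurableSet.inter
    · show MeasurableSet {x : Fin (m+1) → ℝ | ∀ j, x j ∈ Set.Icc (0:ℝ) 1}
      rw [Set.setOf_forall]
      exact MeasurableSet.iInter fun j => (measurable_pi_apply j) measurableSet_Icc
    · exact measurableSet_lt
        (Finset.measurable_prod _ fun j _ => (measurable_pi_apply j).pow_const (α j))
        measurable_const
  -- trivial regime
  by_cases hLle : L ≤ 2
  · have hvol1 : volume E ≤ 1 := by
      have hsub : E ⊆ Set.univ.pi fun _ : Fin (m+1) => Set.Icc (0:ℝ) 1 := by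
        intro x hx
        intro j _
        exact hx.1 j
      refine (measure_mono hsub).trans ?_
      rw [volume_pi_pi]
      simp [Real.volume_Icc]
    refine hvol1.trans ?_
    rw [ENNReal.one_le_ofReal]
    have h1 : Real.exp (-2) ≤ lam ^ (-(1:ℝ)/(d:ℝ)) := by
      rw [Real.rpow_def_of_pos hlam0]
      apply Real.exp_le_exp.2
      rw [← hLdef]
      have heq : L * (-1/(d:ℝ)) = -(L/(d:ℝ)) := by ring
      have hle : L/(d:ℝ) ≤ L := div_le_self hL0.le hd1
      rw [heq]
      linarith
    have h2 : ((1:ℝ)/2)^(M-1) ≤ L^(M-1) := by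
      apply pow_le_pow_left₀ (by norm_num)
      have := Real.log_two_gt_d9
      have hle : Real.log 2 ≤ L := Real.log_le_log (by norm_num) hlam
      linarith
    have hkey : (1:ℝ) ≤ (Real.exp 2 * 2^M) * Real.exp (-2) * ((1/2:ℝ))^(M-1) := by
      rw [Real.exp_neg]
      have h2M : (2:ℝ)^M * ((1/2:ℝ))^(M-1) = 2 := by
        rw [one_div, inv_pow, ← pow_sub₀ (2:ℝ) (by norm_num) (Nat.sub_le M 1),
          (by omega : M - (M-1) = 1), pow_one]
      have hepos : (0:ℝ) < Real.exp 2 := Real.exp_pos 2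
      calc (1:ℝ) ≤ 2 := by norm_num
        _ = (Real.exp 2 * (Real.exp 2)⁻¹) * (2^M * ((1/2:ℝ))^(M-1)) := by
            rw [mul_inv_cancel₀ (ne_of_gt hepos), h2M, one_mul]
        _ = (Real.exp 2 * 2^M) * (Real.exp 2)⁻¹ * ((1/2:ℝ))^(M-1) := by ring
    calc (1:ℝ) ≤ (Real.exp 2 * 2^M) * Real.exp (-2) * ((1/2:ℝ))^(M-1) := hkey
      _ ≤ C * lam ^ (-(1:ℝ)/(d:ℝ)) * L^(M-1) := by
          apply mul_le_mul
          · apply mul_le_mul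
            · rw [hC]; nlinarith [pow_pos (lt_of_lt_of_le one_pos hd1) m]
            · exact h1
            · positivity
            · positivity
          · exact h2
          · positivity
          · positivity
  push_neg at hLle
  have hL2 : 2 < L := hLle
  have hdR : (0:ℝ) < (d:ℝ) := by linarith
  have h1L : 0 < 1 - 1/L := by
    have h : 1/L < 1 := by rw [div_lt_one hL0]; linarith
    linarith
  have h1L1 : 1 - 1/L < 1 := by
    have h : 0 < 1/L := by positivity
    linarith
  set s : ℝ := (1 - 1/L)/(d:ℝ) with hsdef
  have hs0 : 0 < s := div_pos h1L hdR
  have hsd : s * (d:ℝ) = 1 - 1/L := div_mul_cancel₀ _ (ne_of_gt hdR)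
  have hsle : s ≤ 1/(d:ℝ) := by rw [hsdef]; gcongr <;> linarith
  -- the split via the measurable equivalence
  set e : (Fin (m+1) → ℝ) ≃ᵐ ℝ × (Fin m → ℝ) :=
    MeasurableEquiv.piFinSuccAbove (fun _ : Fin (m+1) => ℝ) j0 with hedef
  have hEpre : volume E
      = ((volume : Measure ℝ).prod (volume : Measure (Fin m → ℝ))) (e.symm ⁻¹' E) := by
    rw [← ((volume_preserving_piFinSuccAbove (fun _ : Fin (m+1) => ℝ) j0).symm
      e).measure_preimage hEmeas.nullMeasurableSet]
    rw [← Measure.volume_eq_prod]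
  have hslice : volume E = ∫⁻ y : Fin m → ℝ, volume {t : ℝ | j0.insertNth t y ∈ E} := by
    rw [hEpre, Measure.prod_apply_symm (e.symm.measurable hEmeas)]
    apply lintegral_congr
    intro y
    congr 1
  have hmem : ∀ (t : ℝ) (y : Fin m → ℝ), j0.insertNth t y ∈ E ↔
      ((t ∈ Set.Icc (0:ℝ) 1 ∧ ∀ k, y k ∈ Set.Icc (0:ℝ) 1) ∧
        t ^ d * ∏ k, (y k) ^ (α (j0.succAbove k)) < 1/lam) := by
    intro t y
    set z : Fin (m+1) → ℝ := j0.insertNth t y with hzdef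
    rw [hEdef]
    simp only [Set.mem_setOf_eq]
    rw [Fin.forall_iff_succAbove j0, Fin.prod_univ_succAbove (fun j => z j ^ α j) j0]
    simp only [hzdef, Fin.insertNth_apply_same, Fin.insertNth_apply_succAbove, hαj0]
  -- the per-coordinate functions
  set c : Fin m → ℝ := fun k => lam ^ (-(1:ℝ)/(α (j0.succAbove k) : ℝ)) with hcdef
  have hαk1 : ∀ k : Fin m, (1:ℝ) ≤ (α (j0.succAbove k) : ℝ) := fun k => by
    exact_mod_cast hα (j0.succAbove k)
  have hαk0 : ∀ k : Fin m, (0:ℝ) < (α (j0.succAbove k) : ℝ) := fun k => by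
    linarith [hαk1 k]
  have hc0 : ∀ k, 0 < c k := fun k => Real.rpow_pos_of_pos hlam0 _
  have hc1 : ∀ k, c k ≤ 1 := fun k => Real.rpow_le_one_of_one_le_of_nonpos hlam1
    (div_nonpos_of_nonpos_of_nonneg (by norm_num) (hαk0 k).le)
  have hckpow : ∀ k, c k ^ (α (j0.succAbove k)) = 1/lam := by
    intro k
    have ha : ((α (j0.succAbove k)):ℝ) ≠ 0 := ne_of_gt (hαk0 k)
    rw [hcdef]
    rw [← Real.rpow_natCast (lam ^ (-(1:ℝ)/(α (j0.succAbove k) : ℝ))) (α (j0.succAbove k)),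
      ← Real.rpow_mul hlam0.le]
    rw [(by field_simp : (-(1:ℝ)/(α (j0.succAbove k) : ℝ)) * ((α (j0.succAbove k)):ℝ) = -1)]
    rw [Real.rpow_neg_one, one_div]
  set F : Fin m → ℝ → ENNReal := fun k => Set.indicator (Set.Icc (c k) 1)
      (fun u => ENNReal.ofReal (u ^ (((α (j0.succAbove k)) : ℝ) * (-(1:ℝ)/(d:ℝ))))) with hFdef
  set G : Fin m → ℝ → ENNReal := fun k => Set.indicator (Set.Ioc (0:ℝ) 1)
      (fun u => ENNReal.ofReal (u ^ (((α (j0.succAbove k)) : ℝ) * (-s)))) with hGdef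
  have hFmeas : ∀ k, Measurable (F k) := fun k =>
    Measurable.indicator (by fun_prop) measurableSet_Icc
  have hGmeas : ∀ k, Measurable (G k) := fun k =>
    Measurable.indicator (by fun_prop) measurableSet_Ioc
  -- pointwise slice bound
  have hae : ∀ᵐ y : Fin m → ℝ, volume {t : ℝ | j0.insertNth t y ∈ E} ≤
      ENNReal.ofReal (lam ^ (-(1:ℝ)/(d:ℝ))) * ∏ k, F k (y k) +
      ENNReal.ofReal (lam ^ (-s)) * ∏ k, G k (y k) := by
    have hnull : ∀ᵐ y : Fin m → ℝ, ∀ k, y k ≠ 0 := by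
      rw [ae_all_iff]
      intro k
      rw [MeasureTheory.volume_pi]
      exact Measure.ae_eval_ne (fun _ : Fin m => (volume : Measure ℝ)) k 0
    filter_upwards [hnull] with y hy
    by_cases hcube : ∀ k, y k ∈ Set.Icc (0:ℝ) 1
    · have hy0 : ∀ k, 0 < y k := fun k => lt_of_le_of_ne (hcube k).1 (Ne.symm (hy k))
      have hP0 : 0 < ∏ k, (y k) ^ (α (j0.succAbove k)) :=
        Finset.prod_pos fun k _ => pow_pos (hy0 k) _
      set P : ℝ := ∏ k, (y k) ^ (α (j0.succAbove k)) with hPdef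
      by_cases hPlam : 1/lam ≤ P
      · -- main region: use F
        have hlp : 0 < lam * P := by positivity
        have hsub : {t : ℝ | j0.insertNth t y ∈ E}
            ⊆ Set.Ico 0 ((lam * P) ^ (-(1:ℝ)/(d:ℝ))) := by
          intro t ht
          rw [Set.mem_setOf_eq, hmem] at ht
          obtain ⟨⟨⟨ht0, ht1⟩, -⟩, hlt⟩ := ht
          refine ⟨ht0, ?_⟩
          have h2 : t ^ d < ((lam * P) ^ (-(1:ℝ)/(d:ℝ))) ^ d := by
            have hrw : ((lam * P) ^ (-(1:ℝ)/(d:ℝ))) ^ d = (lam * P)⁻¹ := by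
              rw [← Real.rpow_natCast ((lam * P) ^ (-(1:ℝ)/(d:ℝ))) d,
                ← Real.rpow_mul hlp.le]
              rw [(by field_simp : (-(1:ℝ)/(d:ℝ)) * ((d:ℕ):ℝ) = -1), Real.rpow_neg_one]
            rw [hrw]
            have h3 : t ^ d < (1/lam)/P := (lt_div_iff₀ hP0).2 hlt
            rw [(by field_simp : (1/lam)/P = (lam*P)⁻¹)] at h3
            exact h3
          exact lt_of_pow_lt_pow_left₀ d (Real.rpow_nonneg hlp.le _) h2
        have hck : ∀ k, y k ∈ Set.Icc (c k) 1 := by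
          intro k
          refine ⟨?_, (hcube k).2⟩
          by_contra hlt
          push_neg at hlt
          have h3 : (y k)^(α (j0.succAbove k)) < c k ^ (α (j0.succAbove k)) :=
            pow_lt_pow_left₀ hlt (hy0 k).le (by have := hα (j0.succAbove k); omega)
          have h4 : P ≤ (y k)^(α (j0.succAbove k)) := by
            rw [hPdef, ← Finset.mul_prod_erase univ _ (mem_univ k)]
            apply mul_le_of_le_one_right (pow_nonneg (hy0 k).le _)
            apply Finset.prod_le_one
            · intro j _; exact pow_nonneg (hy0 j).le _
            · intro j _; exact pow_le_one₀ (hy0 j).le (hcube j).2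
          rw [hckpow k] at h3
          linarith
        have hprodF : ∏ k, F k (y k)
            = ENNReal.ofReal (∏ k, (y k) ^ (((α (j0.succAbove k)) : ℝ) * (-(1:ℝ)/(d:ℝ)))) := by
          rw [ENNReal.ofReal_prod_of_nonneg (fun k _ => Real.rpow_nonneg (hy0 k).le _)]
          apply Finset.prod_congr rfl
          intro k _
          rw [hFdef]
          exact Set.indicator_of_mem (hck k) _
        have hval : lam ^ (-(1:ℝ)/(d:ℝ))
            * ∏ k, (y k) ^ (((α (j0.succAbove k)) : ℝ) * (-(1:ℝ)/(d:ℝ)))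
            = (lam * P) ^ (-(1:ℝ)/(d:ℝ)) := by
          rw [Real.mul_rpow hlam0.le hP0.le]
          congr 1
          rw [hPdef, ← Real.finset_prod_rpow _ _ (fun k _ => pow_nonneg (hy0 k).le _) _]
          apply Finset.prod_congr rfl
          intro k _
          rw [← Real.rpow_natCast (y k) (α (j0.succAbove k)), ← Real.rpow_mul (hy0 k).le]
        calc volume {t : ℝ | j0.insertNth t y ∈ E}
            ≤ ENNReal.ofReal ((lam * P) ^ (-(1:ℝ)/(d:ℝ))) := by
              refine (measure_mono hsub).trans ?_
              rw [Real.volume_Ico, sub_zero]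
          _ = ENNReal.ofReal (lam ^ (-(1:ℝ)/(d:ℝ))) * ∏ k, F k (y k) := by
              rw [hprodF, ← ENNReal.ofReal_mul (Real.rpow_nonneg hlam0.le _), hval]
          _ ≤ _ := self_le_add_right _ _
      · -- small region: use G
        push_neg at hPlam
        have hsub1 : {t : ℝ | j0.insertNth t y ∈ E} ⊆ Set.Icc 0 1 :=
          fun t ht => ((hmem t y).1 ht).1.1
        have hprodG : ∏ k, G k (y k)
            = ENNReal.ofReal (∏ k, (y k) ^ (((α (j0.succAbove k)) : ℝ) * (-s))) := by
          rw [ENNReal.ofReal_prod_of_nonneg (fun k _ => Real.rpow_nonneg (hy0 k).le _)]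
          apply Finset.prod_congr rfl
          intro k _
          rw [hGdef]
          have hmemk : y k ∈ Set.Ioc (0:ℝ) 1 := ⟨hy0 k, (hcube k).2⟩
          exact Set.indicator_of_mem hmemk _
        have hval2 : lam ^ (-s) * ∏ k, (y k) ^ (((α (j0.succAbove k)) : ℝ) * (-s))
            = (lam * P) ^ (-s) := by
          rw [Real.mul_rpow hlam0.le hP0.le]
          congr 1
          rw [hPdef, ← Real.finset_prod_rpow _ _ (fun k _ => pow_nonneg (hy0 k).le _) _]
          apply Finset.prod_congr rfl
          intro k _
          rw [← Real.rpow_natCast (y k) (α (j0.succAbove k)), ← Real.rpow_mul (hy0 k).le]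
        have hone : (1:ENNReal) ≤ ENNReal.ofReal (lam ^ (-s)) * ∏ k, G k (y k) := by
          rw [hprodG, ← ENNReal.ofReal_mul (Real.rpow_nonneg hlam0.le _), hval2,
            ENNReal.one_le_ofReal]
          apply Real.one_le_rpow_of_pos_of_le_one_of_nonpos (mul_pos hlam0 hP0) ?_ (by linarith)
          have h5 : P * lam < 1 := (lt_div_iff₀ hlam0).1 hPlam
          nlinarith
        calc volume {t : ℝ | j0.insertNth t y ∈ E} ≤ volume (Set.Icc (0:ℝ) 1) :=
              measure_mono hsub1
          _ = 1 := by rw [Real.volume_Icc]; norm_num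
          _ ≤ _ := hone.trans (le_add_self)
    · -- slice empty
      have hempty : {t : ℝ | j0.insertNth t y ∈ E} = ∅ := by
        ext t
        simp only [Set.mem_setOf_eq, Set.mem_empty_iff_false, iff_false]
        intro h
        exact hcube ((hmem t y).1 h).1.2
      rw [hempty, measure_empty]
      exact zero_le
  -- integrate the bound
  have hbound : volume E ≤ ENNReal.ofReal (lam ^ (-(1:ℝ)/(d:ℝ))) * ∏ k, (∫⁻ t, F k t) +
      ENNReal.ofReal (lam ^ (-s)) * ∏ k, (∫⁻ t, G k t) := by
    rw [hslice]
    refine (lintegral_mono_ae hae).trans ?_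
    have hFprodmeas : Measurable fun y : Fin m → ℝ => ∏ k, F k (y k) :=
      Finset.measurable_prod _ fun k _ => (hFmeas k).comp (measurable_pi_apply k)
    have hGprodmeas : Measurable fun y : Fin m → ℝ => ∏ k, G k (y k) :=
      Finset.measurable_prod _ fun k _ => (hGmeas k).comp (measurable_pi_apply k)
    rw [lintegral_add_left (hFprodmeas.const_mul _)]
    rw [lintegral_const_mul _ hFprodmeas, lintegral_const_mul _ hGprodmeas]
    rw [lintegral_pi_prod F hFmeas, lintegral_pi_prod G hGmeas]
  -- factor bounds
  have key_div : ∀ γ : ℝ, 0 ≤ γ → γ ≤ 1 - 1/(d:ℝ) → 1/(1-γ) ≤ (d:ℝ) := by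
    intro γ h0 h1
    have h2 : 0 < 1/(d:ℝ) := by positivity
    have h3 : 1/(d:ℝ) ≤ 1 - γ := by linarith
    rw [div_le_iff₀ (by linarith : (0:ℝ) < 1 - γ)]
    have h4 : (d:ℝ) * (1/(d:ℝ)) = 1 := mul_one_div_cancel (ne_of_gt hdR)
    nlinarith
  have hfrac : ∀ k : Fin m, α (j0.succAbove k) ≠ d →
      ((α (j0.succAbove k)):ℝ)/(d:ℝ) ≤ 1 - 1/(d:ℝ) := by
    intro k hk
    have hklt : α (j0.succAbove k) < d := lt_of_le_of_ne (hα'le k) hk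
    have h1 : ((α (j0.succAbove k)):ℝ) ≤ (d:ℝ) - 1 := by
      have : (α (j0.succAbove k) : ℝ) + 1 ≤ (d:ℝ) := by exact_mod_cast hklt
      linarith
    rw [div_le_iff₀ hdR]
    have : (1 - 1/(d:ℝ)) * (d:ℝ) = (d:ℝ) - 1 := by field_simp
    linarith
  have hFle : ∀ k, (∫⁻ t, F k t) ≤ ENNReal.ofReal (if α (j0.succAbove k) = d then L else (d:ℝ)) := by
    intro k
    rw [hFdef]
    simp only []
    rw [lintegral_indicator measurableSet_Icc]
    by_cases hk : α (j0.succAbove k) = d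
    · rw [if_pos hk, hk]
      rw [(by field_simp : ((d:ℕ):ℝ) * (-(1:ℝ)/(d:ℝ)) = -1)]
      rw [lint_inv_Icc _ (hc0 k) (hc1 k)]
      apply ENNReal.ofReal_le_ofReal
      have hinv : (1:ℝ)/(c k) = lam ^ ((1:ℝ)/(α (j0.succAbove k) : ℝ)) := by
        rw [hcdef, one_div, ← Real.rpow_neg hlam0.le]
        congr 1
        rw [neg_div, neg_neg, one_div]
      rw [hinv, Real.log_rpow hlam0, ← hLdef]
      have h1a : (1:ℝ)/(α (j0.succAbove k) : ℝ) ≤ 1 := by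
        rw [div_le_one (hαk0 k)]; exact hαk1 k
      nlinarith [hL0.le, hαk0 k]
    · rw [if_neg hk]
      have hsubIoc : Set.Icc (c k) 1 ⊆ Set.Ioc (0:ℝ) 1 := fun u hu =>
        ⟨lt_of_lt_of_le (hc0 k) hu.1, hu.2⟩
      have hmono : ∫⁻ u in Set.Icc (c k) 1,
          ENNReal.ofReal (u ^ (((α (j0.succAbove k)) : ℝ) * (-(1:ℝ)/(d:ℝ))))
          ≤ ∫⁻ u in Set.Ioc (0:ℝ) 1,
          ENNReal.ofReal (u ^ (((α (j0.succAbove k)) : ℝ) * (-(1:ℝ)/(d:ℝ)))) :=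
        lintegral_mono_set hsubIoc
      refine hmono.trans ?_
      rw [(by ring : ((α (j0.succAbove k)):ℝ) * (-(1:ℝ)/(d:ℝ))
        = -(((α (j0.succAbove k)):ℝ)/(d:ℝ)))]
      rw [lint_rpow_Ioc _ (by positivity) (by
        rw [div_lt_one hdR]
        exact_mod_cast lt_of_le_of_ne (hα'le k) hk)]
      exact ENNReal.ofReal_le_ofReal (key_div _ (by positivity) (hfrac k hk))
  have hGle : ∀ k, (∫⁻ t, G k t) ≤ ENNReal.ofReal (if α (j0.succAbove k) = d then L else (d:ℝ)) := by
    intro k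
    rw [hGdef]
    simp only []
    rw [lintegral_indicator measurableSet_Ioc]
    have hγd : ((α (j0.succAbove k)):ℝ) * s ≤ 1 - 1/L := by
      have h1 : ((α (j0.succAbove k)):ℝ) * s ≤ (d:ℝ) * s := by
        apply mul_le_mul_of_nonneg_right _ hs0.le
        exact_mod_cast hα'le k
      rw [mul_comm] at h1
      linarith [hsd]
    have hγlt : ((α (j0.succAbove k)):ℝ) * s < 1 := by
      have h2 : 0 < 1/L := by positivity
      linarith
    rw [(by ring : ((α (j0.succAbove k)):ℝ) * (-s) = -(((α (j0.succAbove k)):ℝ) * s))]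
    rw [lint_rpow_Ioc _ (by positivity) hγlt]
    apply ENNReal.ofReal_le_ofReal
    by_cases hk : α (j0.succAbove k) = d
    · rw [if_pos hk]
      have heq : ((α (j0.succAbove k)):ℝ) * s = 1 - 1/L := by
        rw [hk, mul_comm]
        exact hsd
      rw [heq, (by ring : 1 - (1 - 1/L) = 1/L), one_div_one_div]
    · rw [if_neg hk]
      apply key_div _ (by positivity)
      have h1 : ((α (j0.succAbove k)):ℝ) * s ≤ ((α (j0.succAbove k)):ℝ) * (1/(d:ℝ)) :=
        mul_le_mul_of_nonneg_left hsle (hαk0 k).le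
      rw [mul_one_div] at h1
      exact h1.trans (hfrac k hk)
  -- product of factor bounds
  have hprodbnd : (∏ k : Fin m, ENNReal.ofReal (if α (j0.succAbove k) = d then L else (d:ℝ)))
      ≤ ENNReal.ofReal ((d:ℝ)^m * L^(M-1)) := by
    rw [← ENNReal.ofReal_prod_of_nonneg (fun k _ => by
      split_ifs
      exacts [hL0.le, hdR.le])]
    apply ENNReal.ofReal_le_ofReal
    rw [Finset.prod_ite, Finset.prod_const, Finset.prod_const, hMcard]
    rw [mul_comm]
    apply mul_le_mul _ le_rfl (pow_nonneg hL0.le _) (pow_nonneg hdR.le _)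
    apply pow_le_pow_right₀ hd1
    exact le_trans (Finset.card_filter_le _ _) (by simp)
  have hQF : ∏ k, (∫⁻ t, F k t) ≤ ENNReal.ofReal ((d:ℝ)^m * L^(M-1)) :=
    (Finset.prod_le_prod' fun k _ => hFle k).trans hprodbnd
  have hQG : ∏ k, (∫⁻ t, G k t) ≤ ENNReal.ofReal ((d:ℝ)^m * L^(M-1)) :=
    (Finset.prod_le_prod' fun k _ => hGle k).trans hprodbnd
  -- scalar comparison
  have hscal : lam ^ (-s) ≤ 3 * lam ^ (-(1:ℝ)/(d:ℝ)) := by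
    have hs_eq : -s = -(1:ℝ)/(d:ℝ) + 1/((d:ℝ)*L) := by
      have hLne : L ≠ 0 := ne_of_gt hL0
      have hdne : (d:ℝ) ≠ 0 := ne_of_gt hdR
      rw [hsdef]
      field_simp
      ring
    rw [hs_eq, Real.rpow_add hlam0]
    have h3 : lam ^ ((1:ℝ)/((d:ℝ)*L)) ≤ 3 := by
      rw [Real.rpow_def_of_pos hlam0, ← hLdef]
      rw [(by field_simp : L * (1/((d:ℝ)*L)) = 1/(d:ℝ))]
      calc Real.exp (1/(d:ℝ)) ≤ Real.exp 1 := by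
            apply Real.exp_le_exp.2
            rw [div_le_one hdR]
            exact hd1
        _ ≤ 3 := by linarith [Real.exp_one_lt_d9]
    calc lam ^ (-(1:ℝ)/(d:ℝ)) * lam ^ ((1:ℝ)/((d:ℝ)*L))
        ≤ lam ^ (-(1:ℝ)/(d:ℝ)) * 3 :=
          mul_le_mul_of_nonneg_left h3 (Real.rpow_nonneg hlam0.le _)
      _ = 3 * lam ^ (-(1:ℝ)/(d:ℝ)) := by ring
  -- final assembly
  have hrp : (0:ℝ) ≤ lam ^ (-(1:ℝ)/(d:ℝ)) := Real.rpow_nonneg hlam0.le _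
  have hQ0 : (0:ℝ) ≤ (d:ℝ)^m * L^(M-1) := by positivity
  refine hbound.trans ?_
  calc ENNReal.ofReal (lam ^ (-(1:ℝ)/(d:ℝ))) * ∏ k, (∫⁻ t, F k t) +
      ENNReal.ofReal (lam ^ (-s)) * ∏ k, (∫⁻ t, G k t)
      ≤ ENNReal.ofReal (lam ^ (-(1:ℝ)/(d:ℝ))) * ENNReal.ofReal ((d:ℝ)^m * L^(M-1)) +
        ENNReal.ofReal (lam ^ (-s)) * ENNReal.ofReal ((d:ℝ)^m * L^(M-1)) :=
        add_le_add (mul_le_mul_right hQF _) (mul_le_mul_right hQG _)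
    _ = ENNReal.ofReal (lam ^ (-(1:ℝ)/(d:ℝ)) * ((d:ℝ)^m * L^(M-1))) +
        ENNReal.ofReal (lam ^ (-s) * ((d:ℝ)^m * L^(M-1))) := by
        rw [← ENNReal.ofReal_mul hrp, ← ENNReal.ofReal_mul (Real.rpow_nonneg hlam0.le _)]
    _ ≤ ENNReal.ofReal (C * lam ^ (-(1:ℝ)/(d:ℝ)) * L^(M-1)) := by
        rw [← ENNReal.ofReal_add (by positivity) (by positivity)]
        apply ENNReal.ofReal_le_ofReal
        have h6 : lam ^ (-s) * ((d:ℝ)^m * L^(M-1))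
            ≤ 3 * lam ^ (-(1:ℝ)/(d:ℝ)) * ((d:ℝ)^m * L^(M-1)) :=
          mul_le_mul_of_nonneg_right hscal hQ0
        have h7 : 4*(d:ℝ)^m ≤ C := by
          rw [hC]
          nlinarith [mul_pos (Real.exp_pos 2) (pow_pos (by norm_num : (0:ℝ) < 2) M)]
        have h8 : lam ^ (-(1:ℝ)/(d:ℝ)) * ((d:ℝ)^m * L^(M-1)) +
            3 * lam ^ (-(1:ℝ)/(d:ℝ)) * ((d:ℝ)^m * L^(M-1))
            = (4*(d:ℝ)^m) * (lam ^ (-(1:ℝ)/(d:ℝ)) * L^(M-1)) := by ring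
        have h9 : (0:ℝ) ≤ lam ^ (-(1:ℝ)/(d:ℝ)) * L^(M-1) := by positivity
        nlinarith [mul_le_mul_of_nonneg_right h7 h9]
end
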